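/- arXiv:1701.02626 — 7 statements merged into one kernel-verified Lean document; each statement's English description precedes it below -/
import Mathlib

section
/- Assume ρ = g(κ) < 1. Then lim_{x→∞} e^{κx} H((-∞,-x)) = 0. -/
open MeasureTheory ProbabilityTheory Filter Set
open scoped ENNReal

noncomputable section

/-- If `ρ = g(κ) < 1`, then `e^{κx} H((-∞,-x)) → 0` as `x → ∞`. -/
theorem left_tail_renewal_defective
    {Ω : Type*} [MeasurableSpace Ω] (P : Measure Ω) [IsProbabilityMeasure P]
    (X : Ω → ℝ) (hX : Measurable X)
    (Xk : ℕ → Ω → ℝ) (hXkmeas : ∀ n, Measurable (Xk n))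
    (hindep : iIndepFun Xk P)
    (hident : ∀ n, P.map (Xk n) = P.map X)
    (S : ℕ → Ω → ℝ) (hS : ∀ n ω, S n ω = ∑ i ∈ Finset.range n, Xk i ω)
    (g : ℝ → ℝ≥0∞) (hg : ∀ θ, g θ = ∫⁻ ω, ENNReal.ofReal (Real.exp (-θ * X ω)) ∂P)
    -- `E X ∈ (0, ∞]`
    (hneg : ∫⁻ ω, ENNReal.ofReal (-X ω) ∂P < ⊤)
    (hmean : ∫⁻ ω, ENNReal.ofReal (-X ω) ∂P < ∫⁻ ω, ENNReal.ofReal (X ω) ∂P)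
    (hXneg : 0 < P {ω | X ω < 0})
    (hθ : ∃ θ > 0, g θ < ⊤)
    (κ : ℝ) (hκ : κ = sSup {θ | 0 < θ ∧ g θ < 1})
    (hρ : g κ < 1) :
    Tendsto (fun x : ℝ => ENNReal.ofReal (Real.exp (κ * x)) * ∑' n, P {ω | S n ω < -x})
      atTop (nhds 0) := by
  classical
  -- measurability of the partial sums
  have hSmeas : ∀ n, Measurable (S n) := by
    intro n
    have h : S n = fun ω => ∑ i ∈ Finset.range n, Xk i ω := funext fun ω => hS n ω
    rw [h]
    exact Finset.measurable_sum _ fun i _ => hXkmeas i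
  -- κ is nonnegative
  have hκ0 : 0 ≤ κ := by
    rw [hκ]
    by_cases hb : BddAbove {θ | 0 < θ ∧ g θ < 1}
    · by_cases hne : {θ | 0 < θ ∧ g θ < 1}.Nonempty
      · obtain ⟨θ₀, hθ₀⟩ := hne
        exact hθ₀.1.le.trans (le_csSup hb hθ₀)
      · rw [Set.not_nonempty_iff_eq_empty.mp hne, Real.sSup_empty]
    · rw [Real.sSup_of_not_bddAbove hb]
  set ρ : ℝ≥0∞ := g κ with hρdef
  have hφmeas : Measurable fun y : ℝ => ENNReal.ofReal (Real.exp (-κ * y)) :=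
    (ENNReal.measurable_ofReal.comp (Real.measurable_exp.comp (measurable_const.mul measurable_id)))
  -- each step has Laplace transform ρ at κ
  have hXkρ : ∀ n, ∫⁻ ω, ENNReal.ofReal (Real.exp (-κ * Xk n ω)) ∂P = ρ := by
    intro n
    calc ∫⁻ ω, ENNReal.ofReal (Real.exp (-κ * Xk n ω)) ∂P
        = ∫⁻ y, ENNReal.ofReal (Real.exp (-κ * y)) ∂(P.map (Xk n)) :=
          (lintegral_map hφmeas (hXkmeas n)).symm
      _ = ∫⁻ y, ENNReal.ofReal (Real.exp (-κ * y)) ∂(P.map X) := by rw [hident n]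
      _ = ∫⁻ ω, ENNReal.ofReal (Real.exp (-κ * X ω)) ∂P := lintegral_map hφmeas hX
      _ = ρ := (hg κ).symm
  -- Laplace transform of S n at κ is ρ^n
  have hSρ : ∀ n, ∫⁻ ω, ENNReal.ofReal (Real.exp (-κ * S n ω)) ∂P = ρ ^ n := by
    intro n
    induction n with
    | zero => simp [hS]
    | succ n ih =>
      have hrw : ∀ ω, ENNReal.ofReal (Real.exp (-κ * S (n + 1) ω)) =
          ENNReal.ofReal (Real.exp (-κ * S n ω)) * ENNReal.ofReal (Real.exp (-κ * Xk n ω)) := by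
        intro ω
        rw [← ENNReal.ofReal_mul (Real.exp_pos _).le, ← Real.exp_add, hS (n + 1),
          Finset.sum_range_succ, ← hS n]
        ring_nf
      have hindepn : IndepFun (S n) (Xk n) P := by
        have h := hindep.indepFun_sum_range_succ hXkmeas n
        have hfun : (∑ j ∈ Finset.range n, Xk j) = S n := by
          funext ω
          rw [hS n ω, Finset.sum_apply]
        rwa [hfun] at h
      have hindep' : IndepFun (fun ω => ENNReal.ofReal (Real.exp (-κ * S n ω)))
          (fun ω => ENNReal.ofReal (Real.exp (-κ * Xk n ω))) P :=
        hindepn.comp hφmeas hφmeas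
      calc ∫⁻ ω, ENNReal.ofReal (Real.exp (-κ * S (n + 1) ω)) ∂P
          = ∫⁻ ω, ENNReal.ofReal (Real.exp (-κ * S n ω)) *
              ENNReal.ofReal (Real.exp (-κ * Xk n ω)) ∂P := by
            exact lintegral_congr hrw
        _ = (∫⁻ ω, ENNReal.ofReal (Real.exp (-κ * S n ω)) ∂P) *
              ∫⁻ ω, ENNReal.ofReal (Real.exp (-κ * Xk n ω)) ∂P :=
            lintegral_mul_eq_lintegral_mul_lintegral_of_indepFun''
              ((hφmeas.comp (hSmeas n)).aemeasurable)
              ((hφmeas.comp (hXkmeas n)).aemeasurable) hindep'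
        _ = ρ ^ n * ρ := by rw [ih, hXkρ n]
        _ = ρ ^ (n + 1) := (pow_succ ρ n).symm
  -- the tilted measures
  set μ : ℕ → Measure Ω := fun n =>
    P.withDensity fun ω => ENNReal.ofReal (Real.exp (-κ * S n ω)) with hμdef
  have hA : ∀ n (x : ℝ), MeasurableSet {ω | S n ω < -x} := fun n x =>
    measurableSet_lt (hSmeas n) measurable_const
  have hμapp : ∀ n (x : ℝ),
      μ n {ω | S n ω < -x} = ∫⁻ ω in {ω | S n ω < -x}, ENNReal.ofReal (Real.exp (-κ * S n ω)) ∂P :=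
    fun n x => withDensity_apply _ (hA n x)
  have hμtot : ∀ n, μ n Set.univ = ρ ^ n := by
    intro n
    rw [hμdef, withDensity_apply _ MeasurableSet.univ, setLIntegral_univ, hSρ n]
  -- the basic Chernoff-type bound
  have hF_le : ∀ n (x : ℝ),
      ENNReal.ofReal (Real.exp (κ * x)) * P {ω | S n ω < -x} ≤ μ n {ω | S n ω < -x} := by
    intro n x
    rw [hμapp n x, ← setLIntegral_const]
    refine setLIntegral_mono (hφmeas.comp (hSmeas n)) fun ω hω => ?_
    refine ENNReal.ofReal_le_ofReal (Real.exp_le_exp.2 ?_)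
    have h1 : S n ω < -x := hω
    have h2 : κ * S n ω ≤ κ * (-x) := mul_le_mul_of_nonneg_left h1.le hκ0
    linarith
  have hF_le_ρ : ∀ n (x : ℝ),
      ENNReal.ofReal (Real.exp (κ * x)) * P {ω | S n ω < -x} ≤ ρ ^ n := fun n x =>
    (hF_le n x).trans (by rw [← hμtot n]; exact measure_mono (Set.subset_univ _))
  have hρ_ne_top : ρ ≠ ∞ := (hρ.trans ENNReal.one_lt_top).ne
  -- each summand tends to 0
  have hD : ∀ n, Tendsto (fun x : ℝ => ENNReal.ofReal (Real.exp (κ * x)) * P {ω | S n ω < -x})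
      atTop (nhds 0) := by
    intro n
    have hanti : Antitone fun x : ℝ => {ω | S n ω < -x} := by
      intro x y hxy ω hω
      simp only [Set.mem_setOf_eq] at hω ⊢
      linarith
    have hinter : ⋂ x : ℝ, {ω | S n ω < -x} = ∅ := by
      ext ω
      simp only [Set.mem_iInter, Set.mem_setOf_eq, Set.mem_empty_iff_false, iff_false, not_forall,
        not_lt]
      exact ⟨-S n ω, by linarith⟩
    have htend : Tendsto (fun x : ℝ => μ n {ω | S n ω < -x}) atTop (nhds 0) := by
      have h := tendsto_measure_iInter_atTop (μ := μ n) (s := fun x : ℝ => {ω | S n ω < -x})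
        (fun x => (hA n x).nullMeasurableSet) hanti
        ⟨0, by
          refine ne_of_lt (lt_of_le_of_lt (measure_mono (Set.subset_univ _)) ?_)
          rw [hμtot n]
          exact ENNReal.pow_lt_top (lt_top_iff_ne_top.2 hρ_ne_top)⟩
      rw [hinter] at h
      simp only [measure_empty] at h
      exact h
    exact tendsto_of_tendsto_of_tendsto_of_le_of_le tendsto_const_nhds htend
      (fun x => zero_le) (fun x => hF_le n x)
  -- conclude by dominated convergence over `n` (counting measure)
  have hmain : Tendsto (fun x : ℝ => ∑' n, ENNReal.ofReal (Real.exp (κ * x)) * P {ω | S n ω < -x})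
      atTop (nhds 0) := by
    have hcount : ∀ x : ℝ, (∑' n, ENNReal.ofReal (Real.exp (κ * x)) * P {ω | S n ω < -x}) =
        ∫⁻ n, ENNReal.ofReal (Real.exp (κ * x)) * P {ω | S n ω < -x} ∂(Measure.count) := by
      intro x
      rw [MeasureTheory.lintegral_count]
    simp only [hcount]
    have h0 : (0 : ℝ≥0∞) = ∫⁻ _ : ℕ, 0 ∂(Measure.count) := by simp
    rw [h0]
    refine tendsto_lintegral_filter_of_dominated_convergence (fun n => ρ ^ n)
      (Filter.Eventually.of_forall fun x => measurable_of_countable _)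
      (Filter.Eventually.of_forall fun x => Filter.Eventually.of_forall fun n => hF_le_ρ n x)
      ?_ (Filter.Eventually.of_forall fun n => hD n)
    rw [MeasureTheory.lintegral_count, ENNReal.tsum_geometric]
    exact ENNReal.inv_ne_top.mpr (tsub_pos_of_lt hρ).ne'
  have heq : (fun x : ℝ => ENNReal.ofReal (Real.exp (κ * x)) * ∑' n, P {ω | S n ω < -x}) =
      fun x : ℝ => ∑' n, ENNReal.ofReal (Real.exp (κ * x)) * P {ω | S n ω < -x} := by
    funext x
    rw [ENNReal.tsum_mul_left]
  rw [heq]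
  exact hmain

end
end

section
/- Let X be a real random variable, κ > 0, α ∈ (0,1), and let L be a slowly varying function. If P(-X > t) = (α/κ) L(t) t^{-(α+1)} e^{-κt} for all t > 0, then E[e^{-κX} 1{-X > t}] ~ L(t)/t^α as t → ∞. -/
open MeasureTheory Filter Set
open scoped ENNReal

noncomputable section

/-- `L : (0,∞) → (0,∞)` is slowly varying. -/
def SlowlyVarying (L : ℝ → ℝ) : Prop :=
  (∀ x > 0, 0 < L x) ∧ ∀ c > 0, Tendsto (fun x => L (c * x) / L x) atTop (nhds 1)

/-- `f ~ g` at infinity: `f(t)/g(t) → 1` as `t → ∞`. -/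
def Asymp (f G : ℝ → ℝ) : Prop := Tendsto (fun t => f t / G t) atTop (nhds 1)

section Aux
open Real

lemma uct {h : ℝ → ℝ} (hm : Measurable h)
    (hp : ∀ u : ℝ, Tendsto (fun x => h (x + u) - h x) atTop (nhds 0))
    {b : ℝ} (hb : 0 ≤ b) {ε : ℝ} (hε : 0 < ε) :
    ∃ T : ℝ, ∀ x ≥ T, ∀ u ∈ Icc (0:ℝ) b, |h (x + u) - h x| ≤ ε := by
  by_contra hcon
  push_neg at hcon
  choose x hx u hu hbad using fun n : ℕ => hcon n
  have hxtop : Tendsto x atTop atTop :=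
    tendsto_atTop_mono hx tendsto_natCast_atTop_atTop
  set I : Set ℝ := Icc 0 (b+1) with hI
  set E : (ℕ → ℝ) → ℕ → Set ℝ := fun y n =>
    I ∩ ⋂ m, ⋂ (_ : n ≤ m), {v : ℝ | |h (y m + v) - h (y m)| ≤ ε/3} with hEdef
  have hmeas : ∀ (y : ℕ → ℝ) (n : ℕ), MeasurableSet (E y n) := by
    intro y n
    refine measurableSet_Icc.inter (MeasurableSet.iInter fun m => MeasurableSet.iInter fun _ => ?_)
    have : Measurable fun v : ℝ => |h (y m + v) - h (y m)| :=
      ((hm.comp (measurable_const_add (y m))).sub measurable_const).abs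
    exact measurableSet_le this measurable_const
  have key : ∀ (y : ℕ → ℝ), Tendsto y atTop atTop → ∃ n : ℕ,
      volume (I \ E y n) < ENNReal.ofReal (1/4) := by
    intro y hy
    have hanti : Antitone fun n => I \ E y n := by
      intro a c hac
      apply diff_subset_diff_right
      refine inter_subset_inter_right _ (iInter_mono fun m => ?_)
      intro v hv
      simp only [mem_iInter] at hv ⊢
      exact fun hm' => hv (le_trans hac hm')
    have hinter : ⋂ n, (I \ E y n) = ∅ := by
      ext v
      simp only [mem_iInter, mem_empty_iff_false, iff_false, not_forall]
      by_cases hvI : v ∈ I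
      · have hev : ∀ᶠ z in atTop, |h (z + v) - h z| ≤ ε/3 := by
          have := (hp v).eventually (eventually_abs_sub_lt 0 (by positivity : (0:ℝ) < ε/3))
          simpa using this.mono fun z hz => le_of_lt (by simpa using hz)
        obtain ⟨Z, hZ⟩ := hev.exists_forall_of_atTop
        obtain ⟨n, hn⟩ := (hy.eventually_ge_atTop Z).exists_forall_of_atTop
        refine ⟨n, fun hc => ?_⟩
        exact absurd ⟨hvI, mem_iInter.2 fun m => mem_iInter.2 fun hm' => hZ _ (hn m hm')⟩ hc.2
      · exact ⟨0, fun hc => hvI hc.1⟩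
    have := tendsto_measure_iInter_atTop
      (fun n => (measurableSet_Icc.diff (hmeas y n)).nullMeasurableSet) hanti
      ⟨0, ((measure_mono diff_subset).trans_lt (by simp [hI] : volume I < ⊤)).ne⟩
    rw [hinter] at this
    simp only [measure_empty] at this
    have := this.eventually_lt_const (by simp : (0:ℝ≥0∞) < ENNReal.ofReal (1/4))
    exact this.exists
  obtain ⟨N, hN⟩ := key x hxtop
  obtain ⟨N', hN'⟩ := key (fun n => x n + u n)
    (tendsto_atTop_mono (fun n => le_add_of_nonneg_right (hu n).1) hxtop)
  set m := max N N' with hmdef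
  set S : Set ℝ := Icc (u m) (b+1) with hS
  set Bad : Set ℝ := (I \ E x N) ∪ ((· - u m) ⁻¹' (I \ E (fun n => x n + u n) N')) with hBad
  have hvolBad : volume Bad < ENNReal.ofReal 1 := by
    have htrans : volume ((· - u m) ⁻¹' (I \ E (fun n => x n + u n) N'))
        = volume (I \ E (fun n => x n + u n) N') := by
      simp only [sub_eq_add_neg]
      exact measure_preimage_add_right volume (-u m) _
    calc volume Bad ≤ _ + _ := measure_union_le _ _
      _ < ENNReal.ofReal (1/4) + ENNReal.ofReal (1/4) := by
          rw [htrans]; exact ENNReal.add_lt_add hN hN'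
      _ ≤ ENNReal.ofReal 1 := by
          rw [← ENNReal.ofReal_add (by norm_num) (by norm_num)]; norm_num
  have hvolS : ENNReal.ofReal 1 ≤ volume S := by
    rw [hS, Real.volume_Icc]
    apply ENNReal.ofReal_le_ofReal
    have := (hu m).2
    linarith
  have hnsub : ¬ (S ⊆ Bad) := fun hsub =>
    absurd (le_trans hvolS (measure_mono hsub)) (not_le.2 hvolBad)
  obtain ⟨v, hvS, hvBad⟩ := not_subset.1 hnsub
  have humem := hu m
  have hvI : v ∈ I := ⟨le_trans humem.1 hvS.1, hvS.2⟩
  have hvmI : v - u m ∈ I := ⟨by linarith [hvS.1], by linarith [hvS.2, humem.1]⟩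
  rw [hBad, mem_union, not_or] at hvBad
  have hv1 : v ∈ E x N := by
    by_contra hc
    exact hvBad.1 ⟨hvI, hc⟩
  have hv2 : v - u m ∈ E (fun n => x n + u n) N' := by
    by_contra hc
    exact hvBad.2 ⟨hvmI, hc⟩
  have h1 : |h (x m + v) - h (x m)| ≤ ε/3 := by
    have := hv1.2
    simp only [mem_iInter, mem_setOf_eq] at this
    exact this m (le_max_left _ _)
  have h2 : |h (x m + v) - h (x m + u m)| ≤ ε/3 := by
    have := hv2.2
    simp only [mem_iInter, mem_setOf_eq] at this
    have h2' := this m (le_max_right _ _)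
    have : x m + u m + (v - u m) = x m + v := by ring
    rwa [this] at h2'
  have : |h (x m + u m) - h (x m)| ≤ 2*ε/3 := by
    have := abs_sub_le (h (x m + u m)) (h (x m + v)) (h (x m))
    rw [abs_sub_comm] at h2
    linarith
  linarith [hbad m]


lemma potter {L : ℝ → ℝ} (hpos : ∀ x > 0, 0 < L x)
    (hsv : ∀ c > 0, Tendsto (fun x => L (c * x) / L x) atTop (nhds 1))
    {L' : ℝ → ℝ} (hL' : Measurable L') (hEq : ∀ x > 0, L x = L' x)
    {δ : ℝ} (hδ : 0 < δ) :
    ∃ T : ℝ, 1 ≤ T ∧ ∀ t ≥ T, ∀ x ≥ 1, L (t * x) ≤ Real.exp δ * L t * x ^ δ := by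
  set h : ℝ → ℝ := fun y => Real.log (L' (Real.exp y)) with hh
  have hhval : ∀ y : ℝ, h y = Real.log (L (Real.exp y)) := fun y => by
    rw [hh]; rw [hEq _ (exp_pos y)]
  have hhm : Measurable h := (hL'.comp measurable_exp).log
  have hp : ∀ u : ℝ, Tendsto (fun x => h (x + u) - h x) atTop (nhds 0) := by
    intro u
    have h1 : Tendsto (fun x : ℝ => L (Real.exp u * Real.exp x) / L (Real.exp x))
        atTop (nhds 1) := (hsv (Real.exp u) (exp_pos u)).comp tendsto_exp_atTop
    have h2 : Tendsto (fun x : ℝ => Real.log (L (Real.exp u * Real.exp x) / L (Real.exp x)))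
        atTop (nhds 0) := by
      have := (Real.continuousAt_log one_ne_zero).tendsto.comp h1
      simpa [Function.comp_def] using this
    refine h2.congr fun x => ?_
    rw [Real.log_div (hpos _ (by positivity)).ne' (hpos _ (exp_pos x)).ne',
      hhval, hhval, ← Real.exp_add]
    ring_nf
  obtain ⟨Y0, hY0⟩ := uct hhm hp (zero_le_one (α := ℝ)) (half_pos hδ)
  -- chained bound
  have chain : ∀ n : ℕ, ∀ y ≥ Y0, ∀ u ∈ Icc (0:ℝ) ((n:ℝ)+1),
      h (y + u) - h y ≤ δ/2 * ((n:ℝ)+1) := by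
    intro n
    induction n with
    | zero =>
      intro y hy u hu
      have := hY0 y hy u (by simpa using hu)
      simp only [Nat.cast_zero, zero_add]
      calc h (y+u) - h y ≤ |h (y+u) - h y| := le_abs_self _
        _ ≤ δ/2 := this
        _ = δ/2 * 1 := (mul_one _).symm
    | succ n ih =>
      intro y hy u hu
      by_cases hc : u ≤ (n:ℝ)+1
      · have := ih y hy u ⟨hu.1, hc⟩
        have hle : δ/2 * ((n:ℝ)+1) ≤ δ/2 * ((n:ℝ)+1+1) := by nlinarith [hδ.le]
        push_cast
        linarith
      · push_neg at hc
        have hu1 : (1:ℝ) ≤ u := by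
          have : (0:ℝ) ≤ (n:ℝ) := Nat.cast_nonneg n
          linarith
        have h1 : h ((y + (u-1)) + 1) - h (y + (u-1)) ≤ δ/2 := by
          have := hY0 (y + (u-1)) (by linarith) 1 ⟨zero_le_one, le_refl 1⟩
          calc h ((y + (u-1)) + 1) - h (y + (u-1)) ≤ |h ((y + (u-1)) + 1) - h (y + (u-1))| :=
            le_abs_self _
            _ ≤ δ/2 := this
        have h2 : h (y + (u-1)) - h y ≤ δ/2 * ((n:ℝ)+1) := by
          apply ih y hy
          constructor
          · linarith
          · have := hu.2; push_cast at this ⊢; linarith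
        have harg : (y + (u-1)) + 1 = y + u := by ring
        rw [harg] at h1
        push_cast
        linarith
  refine ⟨Real.exp (max Y0 0), Real.one_le_exp (le_max_right _ _), fun t ht x hx => ?_⟩
  have ht0 : (0:ℝ) < t := lt_of_lt_of_le (exp_pos _) ht
  have hx0 : (0:ℝ) < x := lt_of_lt_of_le one_pos hx
  set y := Real.log t with hy
  set u := Real.log x with hudef
  have hyY0 : y ≥ Y0 := by
    have : max Y0 0 ≤ y := by
      rw [hy, Real.le_log_iff_exp_le ht0]
      exact ht
    exact le_trans (le_max_left _ _) this
  have hu0 : 0 ≤ u := Real.log_nonneg hx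
  have hun : u ∈ Icc (0:ℝ) ((Nat.floor u : ℝ)+1) := ⟨hu0, (Nat.lt_floor_add_one u).le⟩
  have hbound := chain (Nat.floor u) y hyY0 u hun
  have hbound2 : h (y + u) - h y ≤ δ/2 * (u+1) := by
    have : ((Nat.floor u : ℝ)+1) ≤ u + 1 := by
      have := Nat.floor_le hu0
      linarith
    nlinarith [hδ.le]
  have hhy : h y = Real.log (L t) := by rw [hhval, hy, Real.exp_log ht0]
  have hhyu : h (y + u) = Real.log (L (t * x)) := by
    rw [hhval, hy, hudef, Real.exp_add, Real.exp_log ht0, Real.exp_log hx0]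
  rw [hhy, hhyu] at hbound2
  have hLtx : L (t*x) = Real.exp (Real.log (L (t*x))) :=
    (Real.exp_log (hpos _ (by positivity))).symm
  rw [hLtx]
  have hstep : Real.exp (Real.log (L (t*x))) ≤ Real.exp (Real.log (L t) + δ/2 * (u+1)) := by
    apply Real.exp_le_exp.2
    linarith
  refine le_trans hstep ?_
  rw [Real.exp_add, Real.exp_log (hpos _ ht0)]
  have hsplit : Real.exp (δ/2 * (u+1)) = Real.exp (δ/2) * x ^ (δ/2) := by
    rw [Real.rpow_def_of_pos hx0, ← Real.exp_add]
    congr 1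
    rw [hudef]; ring
  rw [hsplit]
  have hee : Real.exp (δ/2) ≤ Real.exp δ := Real.exp_le_exp.2 (by linarith)
  have hxx : x ^ (δ/2) ≤ x ^ δ := Real.rpow_le_rpow_of_exponent_le hx (by linarith)
  have h1 : Real.exp (δ/2) * x ^ (δ/2) ≤ Real.exp δ * x ^ δ :=
    mul_le_mul hee hxx (Real.rpow_nonneg hx0.le _) (Real.exp_pos _).le
  calc L t * (Real.exp (δ/2) * x ^ (δ/2)) ≤ L t * (Real.exp δ * x ^ δ) :=
        mul_le_mul_of_nonneg_left h1 (hpos t ht0).le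
    _ = Real.exp δ * L t * x ^ δ := by ring


section Kar
variable {α : ℝ} {L L' : ℝ → ℝ}

lemma integ_aux (hα0 : 0 < α) (hpos : ∀ x > 0, 0 < L x)
    (hL' : Measurable L') (hEq : ∀ x > 0, L x = L' x)
    {T : ℝ} (hT1 : 1 ≤ T)
    (hpot : ∀ t ≥ T, ∀ x ≥ 1, L (t * x) ≤ Real.exp (α/2) * L t * x ^ (α/2)) :
    ∀ t ≥ T, IntegrableOn (fun s => L s * s ^ (-(α+1))) (Ioi t) := by
  intro t ht
  have hT0 : (0:ℝ) < T := lt_of_lt_of_le one_pos hT1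
  have ht0 : (0:ℝ) < t := lt_of_lt_of_le hT0 ht
  have hmono : ∀ s ∈ Ioi t, L s ≤ (Real.exp (α/2) * L T * T ^ (-(α/2))) * s ^ (α/2) := by
    intro s hs
    have hs0 : t < s := hs
    have hsT : T ≤ s := le_trans ht hs0.le
    have hx1 : (1:ℝ) ≤ s / T := (one_le_div hT0).2 hsT
    have := hpot T (le_refl T) (s/T) hx1
    rw [mul_div_cancel₀ _ hT0.ne'] at this
    have hdiv : (s/T) ^ (α/2) = s ^ (α/2) * T ^ (-(α/2)) := by
      rw [Real.div_rpow (le_trans hT0.le hsT) hT0.le, Real.rpow_neg hT0.le, div_eq_mul_inv]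
    rw [hdiv] at this
    calc L s ≤ Real.exp (α/2) * L T * (s ^ (α/2) * T ^ (-(α/2))) := this
      _ = (Real.exp (α/2) * L T * T ^ (-(α/2))) * s ^ (α/2) := by ring
  set C := Real.exp (α/2) * L T * T ^ (-(α/2)) with hC
  have hC0 : 0 ≤ C := by
    have := hpos T hT0
    positivity
  have hbd_int : IntegrableOn (fun s : ℝ => C * s ^ (-(1+α/2))) (Ioi t) :=
    (integrableOn_Ioi_rpow_of_lt (by linarith) ht0).const_mul C
  have haesm : AEStronglyMeasurable (fun s => L s * s ^ (-(α+1))) (volume.restrict (Ioi t)) := by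
    have hmb : Measurable fun s : ℝ => L' s * s ^ (-(α+1)) :=
      hL'.mul (measurable_id.pow measurable_const)
    refine hmb.aestronglyMeasurable.congr ?_
    filter_upwards [ae_restrict_mem measurableSet_Ioi] with s hs
    rw [hEq s (lt_trans ht0 hs)]
  refine Integrable.mono' hbd_int haesm ?_
  filter_upwards [ae_restrict_mem measurableSet_Ioi] with s hs
  have hs0 : (0:ℝ) < s := lt_trans ht0 hs
  have hnn : 0 ≤ L s * s ^ (-(α+1)) := mul_nonneg (hpos s hs0).le (Real.rpow_nonneg hs0.le _)
  rw [Real.norm_of_nonneg hnn]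
  calc L s * s ^ (-(α+1)) ≤ (C * s ^ (α/2)) * s ^ (-(α+1)) := by
        apply mul_le_mul_of_nonneg_right (hmono s hs) (Real.rpow_nonneg hs0.le _)
    _ = C * s ^ (-(1+α/2)) := by
        rw [mul_assoc, ← Real.rpow_add hs0]
        ring_nf

lemma karamata (hα0 : 0 < α) (hα1 : α < 1) (hpos : ∀ x > 0, 0 < L x)
    (hsv : ∀ c > 0, Tendsto (fun x => L (c * x) / L x) atTop (nhds 1))
    (hL' : Measurable L') (hEq : ∀ x > 0, L x = L' x)
    {T : ℝ} (hT1 : 1 ≤ T)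
    (hpot : ∀ t ≥ T, ∀ x ≥ 1, L (t * x) ≤ Real.exp (α/2) * L t * x ^ (α/2)) :
    Tendsto (fun t => (∫ s in Ioi t, L s * s ^ (-(α+1))) * t ^ α / L t)
      atTop (nhds (1/α)) := by
  have hT0 : (0:ℝ) < T := lt_of_lt_of_le one_pos hT1
  set Φ : ℝ → ℝ → ℝ := fun t x => (t ^ (α+1) / L t) * (L (t*x) * (t*x) ^ (-(α+1))) with hΦ
  have hΦsimp : ∀ t > (0:ℝ), ∀ x > (0:ℝ), Φ t x = (L (t*x) / L t) * x ^ (-(α+1)) := by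
    intro t ht x hx
    have h1 : (t*x) ^ (-(α+1)) = t ^ (-(α+1)) * x ^ (-(α+1)) :=
      Real.mul_rpow ht.le hx.le
    have h2 : t ^ (α+1) * t ^ (-(α+1)) = 1 := by
      rw [← Real.rpow_add ht, show (α+1) + (-(α+1)) = 0 by ring, Real.rpow_zero]
    simp only [hΦ]
    rw [h1]
    calc t ^ (α+1) / L t * (L (t*x) * (t ^ (-(α+1)) * x ^ (-(α+1))))
        = (t ^ (α+1) * t ^ (-(α+1))) * (L (t*x) * x ^ (-(α+1))) / L t := by ring
      _ = 1 * (L (t*x) * x ^ (-(α+1))) / L t := by rw [h2]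
      _ = (L (t*x) / L t) * x ^ (-(α+1)) := by ring
  -- dominated convergence
  have hDCT : Tendsto (fun t => ∫ x in Ioi (1:ℝ), Φ t x) atTop
      (nhds (∫ x in Ioi (1:ℝ), x ^ (-(α+1)))) := by
    apply tendsto_integral_filter_of_dominated_convergence
      (fun x => Real.exp (α/2) * x ^ (-(1+α/2)))
    · filter_upwards [eventually_ge_atTop T] with t ht
      have ht0 : (0:ℝ) < t := lt_of_lt_of_le hT0 ht
      have hmb : Measurable fun x : ℝ =>
          (t ^ (α+1) / L t) * (L' (t*x) * (t*x) ^ (-(α+1))) := by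
        apply Measurable.const_mul
        exact (hL'.comp (measurable_const_mul t)).mul
          ((measurable_const_mul t).pow measurable_const)
      refine hmb.aestronglyMeasurable.congr ?_
      filter_upwards [ae_restrict_mem measurableSet_Ioi] with x hx
      have hx0 : (0:ℝ) < x := lt_trans one_pos hx
      simp only [hΦ]
      rw [hEq (t*x) (by positivity)]
    · filter_upwards [eventually_ge_atTop T] with t ht
      have ht0 : (0:ℝ) < t := lt_of_lt_of_le hT0 ht
      filter_upwards [ae_restrict_mem measurableSet_Ioi] with x hx
      have hx0 : (0:ℝ) < x := lt_trans one_pos hx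
      rw [hΦsimp t ht0 x hx0]
      have hnn : 0 ≤ (L (t*x) / L t) * x ^ (-(α+1)) := by
        have := hpos (t*x) (by positivity)
        have := hpos t ht0
        positivity
      rw [Real.norm_of_nonneg hnn]
      have hrat : L (t*x) / L t ≤ Real.exp (α/2) * x ^ (α/2) := by
        rw [div_le_iff₀ (hpos t ht0)]
        calc L (t*x) ≤ Real.exp (α/2) * L t * x ^ (α/2) := hpot t ht x hx.le
          _ = Real.exp (α/2) * x ^ (α/2) * L t := by ring
      calc (L (t*x) / L t) * x ^ (-(α+1)) ≤ (Real.exp (α/2) * x ^ (α/2)) * x ^ (-(α+1)) :=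
            mul_le_mul_of_nonneg_right hrat (Real.rpow_nonneg hx0.le _)
        _ = Real.exp (α/2) * x ^ (-(1+α/2)) := by
            rw [mul_assoc, ← Real.rpow_add hx0]; ring_nf
    · exact (integrableOn_Ioi_rpow_of_lt (by linarith) one_pos).const_mul _
    · filter_upwards [ae_restrict_mem measurableSet_Ioi] with x hx
      have hx0 : (0:ℝ) < x := lt_trans one_pos hx
      have hlim : Tendsto (fun t => L (x * t) / L t) atTop (nhds 1) := hsv x hx0
      have hev : ∀ᶠ t in atTop, (L (x * t) / L t) * x ^ (-(α+1)) = Φ t x := by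
        filter_upwards [eventually_gt_atTop (0:ℝ)] with t ht0
        rw [hΦsimp t ht0 x hx0, mul_comm x t]
      have := (hlim.mul_const (x ^ (-(α+1)))).congr' hev
      rwa [one_mul] at this
  have hval : (∫ x in Ioi (1:ℝ), x ^ (-(α+1))) = 1/α := by
    rw [integral_Ioi_rpow_of_lt (by linarith) one_pos]
    rw [Real.one_rpow]
    field_simp
    rw [show -(α + 1) + 1 = -α by ring, div_neg, neg_neg, div_self hα0.ne']
  rw [hval] at hDCT
  refine hDCT.congr' ?_
  filter_upwards [eventually_ge_atTop T] with t ht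
  have ht0 : (0:ℝ) < t := lt_of_lt_of_le hT0 ht
  -- change of variables
  have hcv : (∫ x in Ioi (1:ℝ), (fun s => L s * s ^ (-(α+1))) (t * x))
      = t⁻¹ • ∫ s in Ioi (t*1), L s * s ^ (-(α+1)) :=
    integral_comp_mul_left_Ioi (fun s => L s * s ^ (-(α+1))) 1 ht0
  rw [mul_one] at hcv
  have hIoi : (∫ s in Ioi t, L s * s ^ (-(α+1)))
      = t * ∫ x in Ioi (1:ℝ), L (t*x) * (t*x) ^ (-(α+1)) := by
    rw [hcv, smul_eq_mul, ← mul_assoc, mul_inv_cancel₀ ht0.ne', one_mul]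
  calc (∫ x in Ioi (1:ℝ), Φ t x)
      = (t ^ (α+1) / L t) * ∫ x in Ioi (1:ℝ), L (t*x) * (t*x) ^ (-(α+1)) := by
        simp only [hΦ]; exact integral_const_mul _ _
    _ = (∫ s in Ioi t, L s * s ^ (-(α+1))) * t ^ α / L t := by
        rw [hIoi]
        have : t ^ (α+1) = t * t ^ α := by
          rw [show α + 1 = 1 + α by ring, Real.rpow_add ht0, Real.rpow_one]
        rw [this]
        ring
end Kar


lemma tail_identity {Ω : Type*} [MeasurableSpace Ω] (P : Measure Ω) [IsFiniteMeasure P]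
    {Y : Ω → ℝ} (hY : Measurable Y) {κ : ℝ} (hκ : 0 < κ) (t : ℝ) :
    ∫⁻ ω in {ω | t < Y ω}, ENNReal.ofReal (Real.exp (κ * Y ω)) ∂P
      = ENNReal.ofReal (Real.exp (κ * t)) * P {ω | t < Y ω}
        + ∫⁻ s in Ioi t, ENNReal.ofReal (κ * Real.exp (κ * s)) * P {ω | s < Y ω} := by
  set A : Set Ω := {ω | t < Y ω} with hA
  have hAm : MeasurableSet A := measurableSet_lt measurable_const hY
  have hcont : Continuous fun s : ℝ => κ * Real.exp (κ * s) :=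
    continuous_const.mul (Real.continuous_exp.comp (continuous_const.mul continuous_id))
  set f : Ω → ℝ → ℝ≥0∞ := fun ω s =>
    ({p : Ω × ℝ | p.2 < Y p.1}.indicator
      (fun p => ENNReal.ofReal (κ * Real.exp (κ * p.2))) (ω, s)) with hf
  have hfm : Measurable (Function.uncurry f) := by
    apply Measurable.indicator
    · exact (measurable_const.mul (measurable_snd.const_mul κ).exp).ennreal_ofReal
    · exact measurableSet_lt measurable_snd (hY.comp measurable_fst)
  -- pointwise identity
  have hpoint : ∀ ω ∈ A, ENNReal.ofReal (Real.exp (κ * Y ω))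
      = ENNReal.ofReal (Real.exp (κ * t)) + ∫⁻ s in Ioi t, f ω s := by
    intro ω hω
    have hty : t < Y ω := hω
    have hind : ∀ᵐ s ∂(volume.restrict (Ioi t)),
        f ω s = (Ioo t (Y ω)).indicator (fun s => ENNReal.ofReal (κ * Real.exp (κ * s))) s := by
      filter_upwards [ae_restrict_mem measurableSet_Ioi] with s hs
      simp only [hf]
      by_cases hc : s < Y ω
      · rw [indicator_of_mem (show (ω, s) ∈ {p : Ω × ℝ | p.2 < Y p.1} from hc),
          indicator_of_mem (show s ∈ Ioo t (Y ω) from ⟨hs, hc⟩)]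
      · rw [indicator_of_notMem (show (ω, s) ∉ {p : Ω × ℝ | p.2 < Y p.1} from hc),
          indicator_of_notMem (show s ∉ Ioo t (Y ω) from fun h => hc h.2)]
    rw [lintegral_congr_ae hind]
    rw [lintegral_indicator measurableSet_Ioo, Measure.restrict_restrict measurableSet_Ioo,
      inter_eq_self_of_subset_left Ioo_subset_Ioi_self]
    have hderiv : ∀ s ∈ Set.uIcc t (Y ω),
        HasDerivAt (fun y : ℝ => Real.exp (κ * y)) (κ * Real.exp (κ * s)) s := by
      intro s _
      have h1 : HasDerivAt (fun y : ℝ => κ * y) κ s := by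
        simpa using (hasDerivAt_id s).const_mul κ
      have := h1.exp
      simpa [mul_comm] using this
    have hreal : ∫⁻ s in Ioo t (Y ω), ENNReal.ofReal (κ * Real.exp (κ * s))
        = ENNReal.ofReal (Real.exp (κ * Y ω) - Real.exp (κ * t)) := by
      rw [← ofReal_integral_eq_lintegral_ofReal]
      · congr 1
        rw [← integral_Ioc_eq_integral_Ioo, ← intervalIntegral.integral_of_le hty.le]
        exact intervalIntegral.integral_eq_sub_of_hasDerivAt hderiv
          (hcont.intervalIntegrable _ _)
      · exact (hcont.integrableOn_Icc).mono_set Ioo_subset_Icc_self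
      · filter_upwards with s
        positivity
    rw [hreal, ← ENNReal.ofReal_add (Real.exp_pos _).le (sub_nonneg.2 (Real.exp_le_exp.2
      (mul_le_mul_of_nonneg_left hty.le hκ.le)))]
    congr 1
    ring
  -- split the integral
  have hsplit : ∫⁻ ω in A, ENNReal.ofReal (Real.exp (κ * Y ω)) ∂P
      = ENNReal.ofReal (Real.exp (κ * t)) * P A + ∫⁻ ω in A, (∫⁻ s in Ioi t, f ω s) ∂P := by
    rw [setLIntegral_congr_fun hAm (fun ω hω => hpoint ω hω)]
    rw [lintegral_add_left measurable_const, setLIntegral_const]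
  rw [hsplit]
  congr 1
  -- Tonelli swap
  have hswap : ∫⁻ ω in A, (∫⁻ s in Ioi t, f ω s) ∂P
      = ∫⁻ s in Ioi t, (∫⁻ ω in A, f ω s ∂P) := by
    exact lintegral_lintegral_swap hfm.aemeasurable
  rw [hswap]
  apply setLIntegral_congr_fun measurableSet_Ioi
  intro s hs
  have hfs : ∀ ω, f ω s = ({ω | s < Y ω}).indicator
      (fun _ => ENNReal.ofReal (κ * Real.exp (κ * s))) ω := by
    intro ω
    simp only [hf]
    by_cases hc : s < Y ω
    · rw [indicator_of_mem (show (ω, s) ∈ {p : Ω × ℝ | p.2 < Y p.1} from hc),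
        indicator_of_mem (show ω ∈ {ω | s < Y ω} from hc)]
    · rw [indicator_of_notMem (show (ω, s) ∉ {p : Ω × ℝ | p.2 < Y p.1} from hc),
        indicator_of_notMem (show ω ∉ {ω | s < Y ω} from hc)]
  simp_rw [hfs]
  have hSm : MeasurableSet {ω | s < Y ω} := measurableSet_lt measurable_const hY
  rw [lintegral_indicator hSm, setLIntegral_const, Measure.restrict_apply hSm]
  rw [hA]
  have : {ω | s < Y ω} ∩ {ω | t < Y ω} = {ω | s < Y ω} :=
    inter_eq_self_of_subset_left (fun ω (hω : s < Y ω) => lt_trans hs hω)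
  rw [this]

end Aux

/-- If `P(-X > t) = (α/κ) L(t) t^{-(α+1)} e^{-κt}` for all `t > 0`, with `κ > 0`,
`α ∈ (0,1)` and `L` slowly varying, then `E[e^{-κX} 1{-X > t}] ~ L(t)/t^α`. -/
theorem tilted_tail_asymp_of_exponential_tail
    {Ω : Type*} [MeasurableSpace Ω] (P : Measure Ω) [IsProbabilityMeasure P]
    (X : Ω → ℝ) (hX : Measurable X)
    (κ : ℝ) (hκ : 0 < κ) (α : ℝ) (hα : α ∈ Set.Ioo (0 : ℝ) 1)
    (L : ℝ → ℝ) (hL : SlowlyVarying L)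
    (htail : ∀ t > 0, (P {ω | t < -X ω}).toReal
      = α / κ * L t * t ^ (-(α + 1)) * Real.exp (-κ * t)) :
    Asymp (fun t => ∫ ω in {ω | t < -X ω}, Real.exp (-κ * X ω) ∂P)
      (fun t => L t / t ^ α) := by
  obtain ⟨hα0, hα1⟩ := hα
  have hκ0 : κ ≠ 0 := hκ.ne'
  have hα0' : α ≠ 0 := hα0.ne'
  -- measurable version of L
  set F : ℝ → ℝ := fun t => (P {ω | t < -X ω}).toReal with hF
  have hFanti : Antitone F := by
    intro a b hab
    apply ENNReal.toReal_mono (measure_ne_top P _)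
    exact measure_mono (fun ω (hω : b < -X ω) => lt_of_le_of_lt hab hω)
  have hFm : Measurable F := hFanti.measurable
  set L' : ℝ → ℝ := fun t => (κ/α) * F t * t ^ (α+1) * Real.exp (κ*t) with hL'
  have hL'm : Measurable L' := by
    apply Measurable.mul _ ((measurable_id.const_mul κ).exp)
    exact (measurable_const.mul hFm).mul (measurable_id.pow measurable_const)
  have hEq : ∀ x > (0:ℝ), L x = L' x := by
    intro x hx
    have h1 : x ^ (-(α+1)) * x ^ (α+1) = 1 := by
      rw [← Real.rpow_add hx, show -(α+1) + (α+1) = 0 by ring, Real.rpow_zero]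
    have h2 : Real.exp (-κ*x) * Real.exp (κ*x) = 1 := by
      rw [← Real.exp_add, show -κ*x + κ*x = 0 by ring, Real.exp_zero]
    have h3 : κ/α * (α/κ) = 1 := by field_simp
    simp only [hL', hF]
    rw [htail x hx]
    calc L x = (κ/α * (α/κ)) * L x * (x ^ (-(α+1)) * x ^ (α+1))
          * (Real.exp (-κ*x) * Real.exp (κ*x)) := by rw [h1, h2, h3]; ring
      _ = κ/α * (α / κ * L x * x ^ (-(α + 1)) * Real.exp (-κ * x)) * x ^ (α+1)
          * Real.exp (κ*x) := by ring
  -- Potter bound and consequences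
  obtain ⟨T, hT1, hpot⟩ := potter hL.1 hL.2 hL'm hEq (half_pos hα0)
  have hT0 : (0:ℝ) < T := lt_of_lt_of_le one_pos hT1
  have hint := integ_aux hα0 hL.1 hL'm hEq hT1 hpot
  have hkar := karamata hα0 hα1 hL.1 hL.2 hL'm hEq hT1 hpot
  -- numerator identity
  have hnum : ∀ t ≥ T, (∫ ω in {ω | t < -X ω}, Real.exp (-κ * X ω) ∂P)
      = α/κ * L t * t ^ (-(α+1)) + α * ∫ s in Ioi t, L s * s ^ (-(α+1)) := by
    intro t ht
    have ht0 : (0:ℝ) < t := lt_of_lt_of_le hT0 ht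
    have hSm : MeasurableSet {ω | t < -X ω} := measurableSet_lt measurable_const hX.neg
    have hnn : 0 ≤ᵐ[P.restrict {ω | t < -X ω}] fun ω => Real.exp (-κ * X ω) := by
      filter_upwards with ω
      positivity
    have hsm : AEStronglyMeasurable (fun ω => Real.exp (-κ * X ω))
        (P.restrict {ω | t < -X ω}) :=
      (Real.measurable_exp.comp (hX.const_mul (-κ))).aestronglyMeasurable
    rw [integral_eq_lintegral_of_nonneg_ae hnn hsm]
    have hid := tail_identity P (Y := fun ω => -X ω) hX.neg hκ t
    have hcongr : ∫⁻ ω in {ω | t < -X ω}, ENNReal.ofReal (Real.exp (-κ * X ω)) ∂P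
        = ∫⁻ ω in {ω | t < -X ω}, ENNReal.ofReal (Real.exp (κ * (-X ω))) ∂P := by
      apply lintegral_congr
      intro ω
      rw [show -κ * X ω = κ * (-X ω) by ring]
    rw [hcongr, hid]
    -- second term
    have hterm2 : (∫⁻ s in Ioi t, ENNReal.ofReal (κ * Real.exp (κ * s)) * P {ω | s < -X ω})
        = ENNReal.ofReal (∫ s in Ioi t, α * (L s * s ^ (-(α+1)))) := by
      have hptw : ∀ᵐ s ∂(volume.restrict (Ioi t)),
          ENNReal.ofReal (κ * Real.exp (κ * s)) * P {ω | s < -X ω}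
            = ENNReal.ofReal (α * (L s * s ^ (-(α+1)))) := by
        filter_upwards [ae_restrict_mem measurableSet_Ioi] with s hs
        have hs0 : (0:ℝ) < s := lt_trans ht0 hs
        rw [← ENNReal.ofReal_toReal (measure_ne_top P {ω | s < -X ω}),
          ← ENNReal.ofReal_mul (by positivity)]
        congr 1
        have := htail s hs0
        rw [this]
        have hxp : Real.exp (κ*s) * Real.exp (-κ*s) = 1 := by
          rw [← Real.exp_add, show κ*s + -κ*s = 0 by ring, Real.exp_zero]
        have h3 : κ * (α/κ) = α := by field_simp
        calc κ * Real.exp (κ * s) * (α / κ * L s * s ^ (-(α + 1)) * Real.exp (-κ * s))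
            = (κ * (α/κ)) * (L s * s ^ (-(α+1))) * (Real.exp (κ*s) * Real.exp (-κ*s)) := by
              ring
          _ = α * (L s * s ^ (-(α+1))) := by rw [hxp, h3, mul_one]
      rw [lintegral_congr_ae hptw]
      rw [← ofReal_integral_eq_lintegral_ofReal ((hint t ht).const_mul α)]
      filter_upwards [ae_restrict_mem measurableSet_Ioi] with s hs
      have hs0 : (0:ℝ) < s := lt_trans ht0 hs
      have := hL.1 s hs0
      positivity
    rw [hterm2]
    have hfin1 : ENNReal.ofReal (Real.exp (κ * t)) * P {ω | t < -X ω} ≠ ⊤ :=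
      ENNReal.mul_ne_top ENNReal.ofReal_ne_top (measure_ne_top P _)
    rw [ENNReal.toReal_add hfin1 ENNReal.ofReal_ne_top, ENNReal.toReal_mul,
      ENNReal.toReal_ofReal (Real.exp_pos _).le, ENNReal.toReal_ofReal]
    · have hterm1 : Real.exp (κ * t) * (P {ω | t < -X ω}).toReal
          = α/κ * L t * t ^ (-(α+1)) := by
        rw [htail t ht0]
        have hxp : Real.exp (κ*t) * Real.exp (-κ*t) = 1 := by
          rw [← Real.exp_add, show κ*t + -κ*t = 0 by ring, Real.exp_zero]
        calc Real.exp (κ * t) * (α / κ * L t * t ^ (-(α + 1)) * Real.exp (-κ * t))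
            = (α/κ * L t * t ^ (-(α+1))) * (Real.exp (κ*t) * Real.exp (-κ*t)) := by ring
          _ = α/κ * L t * t ^ (-(α+1)) := by rw [hxp, mul_one]
      rw [hterm1, integral_const_mul]
    · apply setIntegral_nonneg measurableSet_Ioi
      intro s hs
      have hs0 : (0:ℝ) < s := lt_trans ht0 hs
      have := hL.1 s hs0
      positivity
  -- final limit
  show Tendsto (fun t => (∫ ω in {ω | t < -X ω}, Real.exp (-κ * X ω) ∂P) / (L t / t ^ α))
    atTop (nhds 1)
  have hlim : Tendsto (fun t : ℝ => α/κ * t⁻¹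
      + α * ((∫ s in Ioi t, L s * s ^ (-(α+1))) * t ^ α / L t)) atTop (nhds 1) := by
    have h1 : Tendsto (fun t : ℝ => α/κ * t⁻¹) atTop (nhds 0) := by
      simpa using tendsto_inv_atTop_zero.const_mul (α/κ)
    have h2 := hkar.const_mul α
    have := h1.add h2
    rw [zero_add] at this
    have hval : α * (1/α) = 1 := by field_simp
    rwa [hval] at this
  refine hlim.congr' ?_
  filter_upwards [eventually_ge_atTop T] with t ht
  have ht0 : (0:ℝ) < t := lt_of_lt_of_le hT0 ht
  have hLt := hL.1 t ht0
  have htα : (0:ℝ) < t ^ α := Real.rpow_pos_of_pos ht0 α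
  rw [hnum t ht]
  have hpow : t ^ (-(α+1)) * t ^ α = t⁻¹ := by
    rw [← Real.rpow_add ht0, show -(α+1) + α = -1 by ring, Real.rpow_neg_one]
  rw [div_div_eq_mul_div, add_mul, mul_comm]
  rw [eq_comm]
  field_simp
  have hABt : t ^ (-1 + -α) * t ^ α * t = 1 := by
    rw [← Real.rpow_add ht0, show (-1 + -α) + α = (-1:ℝ) by ring, Real.rpow_neg_one,
      inv_mul_cancel₀ ht0.ne']
  have hE1 : t ^ α * t ^ (-(α+1)) * t = 1 := by
    rw [mul_comm (t ^ α), hpow, inv_mul_cancel₀ ht0.ne']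
  linear_combination (L t) * hE1

end
end

section
/- For every n ≥ 0 and every Borel measurable function f : ℝ → [0,∞], E[f(S_n)] = ρ^n ∫_ℝ e^{-κt} f(-t) Q_X^{*n}(dt), where Q_X(B) = ρ^{-1} E[e^{-κX} 1{-X ∈ B}]. In particular, P(S_n < -x) = ρ^n ∫_{(x,∞)} e^{-κt} Q_X^{*n}(dt) for every x > 0. -/
open MeasureTheory ProbabilityTheory Filter Set
open scoped ENNReal

noncomputable section

/-- `n`-fold convolution power of a measure on `ℝ` (`μ^{*0} = δ_0`). -/
def convPow (μ : Measure ℝ) : ℕ → Measure ℝ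
  | 0 => Measure.dirac 0
  | n + 1 => (convPow μ n).conv μ

/-- Change of measure: for every `n ≥ 0` and Borel `f : ℝ → [0,∞]`,
`E[f(S_n)] = ρ^n ∫ e^{-κ t} f(-t) Q_X^{*n}(dt)`; in particular
`P(S_n < -x) = ρ^n ∫_{(x,∞)} e^{-κ t} Q_X^{*n}(dt)` for every `x > 0`. -/
theorem change_of_measure_identity
    {Ω : Type*} [MeasurableSpace Ω] (P : Measure Ω) [IsProbabilityMeasure P]
    (X : Ω → ℝ) (hX : Measurable X)
    (Xk : ℕ → Ω → ℝ) (hXkmeas : ∀ n, Measurable (Xk n))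
    (hindep : iIndepFun Xk P)
    (hident : ∀ n, P.map (Xk n) = P.map X)
    (S : ℕ → Ω → ℝ) (hS : ∀ n ω, S n ω = ∑ i ∈ Finset.range n, Xk i ω)
    (g : ℝ → ℝ≥0∞) (hg : ∀ θ, g θ = ∫⁻ ω, ENNReal.ofReal (Real.exp (-θ * X ω)) ∂P)
    -- `E X ∈ (0, ∞]`
    (hneg : ∫⁻ ω, ENNReal.ofReal (-X ω) ∂P < ⊤)
    (hmean : ∫⁻ ω, ENNReal.ofReal (-X ω) ∂P < ∫⁻ ω, ENNReal.ofReal (X ω) ∂P)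
    (hXneg : 0 < P {ω | X ω < 0})
    (hθ : ∃ θ > 0, g θ < ⊤)
    (κ : ℝ) (hκ : κ = sSup {θ | 0 < θ ∧ g θ < 1})
    -- the tilted probability measure `Q_X(B) = ρ⁻¹ E[e^{-κX} 1{-X ∈ B}]`
    (QX : Measure ℝ)
    (hQX : ∀ B : Set ℝ, MeasurableSet B →
      QX B = (g κ)⁻¹ * ∫⁻ ω in {ω | -X ω ∈ B}, ENNReal.ofReal (Real.exp (-κ * X ω)) ∂P)
    (n : ℕ) :
    (∀ f : ℝ → ℝ≥0∞, Measurable f →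
      ∫⁻ ω, f (S n ω) ∂P
        = (g κ) ^ n *
            ∫⁻ t, ENNReal.ofReal (Real.exp (-κ * t)) * f (-t) ∂(convPow QX n)) ∧
      (∀ x : ℝ, 0 < x →
        P {ω | S n ω < -x}
          = (g κ) ^ n *
              ∫⁻ t in Set.Ioi x, ENNReal.ofReal (Real.exp (-κ * t)) ∂(convPow QX n)) := by
  classical
  -- measurability of the exponential weight
  have he : ∀ a : ℝ, Measurable fun t : ℝ => ENNReal.ofReal (Real.exp (-a * t)) := fun a =>
    (Real.measurable_exp.comp (measurable_id.const_mul (-a))).ennreal_ofReal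
  -- `g 0 = 1`
  have hg0 : g 0 = 1 := by
    rw [hg]; simp
  -- `g κ ≠ 0`
  have hρ0 : g κ ≠ 0 := by
    rw [hg]
    refine ne_of_gt ?_
    have hiff := lintegral_pos_iff_support (μ := P)
      (f := fun ω => ENNReal.ofReal (Real.exp (-κ * X ω))) ((he κ).comp hX)
    rw [hiff]
    have : (Function.support fun ω => ENNReal.ofReal (Real.exp (-κ * X ω))) = Set.univ :=
      Set.eq_univ_of_forall fun ω => (ENNReal.ofReal_pos.mpr (Real.exp_pos _)).ne'
    rw [this]
    simp
  -- `g κ ≤ 1`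
  have hρ1 : g κ ≤ 1 := by
    set T : Set ℝ := {θ | 0 < θ ∧ g θ < 1} with hT
    by_cases hne : T.Nonempty
    · by_cases hbdd : BddAbove T
      · -- choose a sequence in `T` converging to `κ = sSup T`
        have hκpos : ∀ k : ℕ, ∃ θ ∈ T, κ - 1 / (k + 1 : ℝ) < θ := by
          intro k
          refine exists_lt_of_lt_csSup hne ?_
          rw [← hκ]
          have : (0:ℝ) < 1 / (k + 1 : ℝ) := by positivity
          linarith
        choose θ hθT hθlt using hκpos
        have hθle : ∀ k, θ k ≤ κ := fun k => hκ ▸ le_csSup hbdd (hθT k)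
        have htend : Tendsto θ atTop (nhds κ) := by
          have h1 : Tendsto (fun k : ℕ => κ - 1 / (k + 1 : ℝ)) atTop (nhds κ) := by
            have := tendsto_one_div_add_atTop_nhds_zero_nat (𝕜 := ℝ)
            have := (tendsto_const_nhds (x := κ) (f := atTop (α := ℕ))).sub this
            simpa using this
          exact tendsto_of_tendsto_of_tendsto_of_le_of_le h1 tendsto_const_nhds
            (fun k => (hθlt k).le) hθle
        -- Fatou
        have hpt : ∀ ω, Tendsto (fun k => ENNReal.ofReal (Real.exp (-θ k * X ω))) atTop
            (nhds (ENNReal.ofReal (Real.exp (-κ * X ω)))) := by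
          intro ω
          refine (ENNReal.continuous_ofReal.tendsto _).comp ?_
          refine (Real.continuous_exp.tendsto _).comp ?_
          exact (htend.neg.mul_const (X ω))
        have hfatou := lintegral_liminf_le (μ := P)
          (f := fun k ω => ENNReal.ofReal (Real.exp (-θ k * X ω))) (u := atTop)
          (fun k => (he (θ k)).comp hX)
        have hliminf_pt : (fun ω => liminf (fun k => ENNReal.ofReal (Real.exp (-θ k * X ω))) atTop)
            = fun ω => ENNReal.ofReal (Real.exp (-κ * X ω)) := by
          funext ω
          exact (hpt ω).liminf_eq
        rw [hliminf_pt] at hfatou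
        have hle1 : liminf (fun k => ∫⁻ ω, ENNReal.ofReal (Real.exp (-θ k * X ω)) ∂P) atTop
            ≤ (1 : ℝ≥0∞) := by
          have : ∀ k, (∫⁻ ω, ENNReal.ofReal (Real.exp (-θ k * X ω)) ∂P) ≤ 1 := by
            intro k
            rw [← hg]
            exact (hθT k).2.le
          calc liminf (fun k => ∫⁻ ω, ENNReal.ofReal (Real.exp (-θ k * X ω)) ∂P) atTop
              ≤ liminf (fun _ : ℕ => (1 : ℝ≥0∞)) atTop :=
                liminf_le_liminf (Eventually.of_forall this)
            _ = 1 := liminf_const _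
        rw [hg]
        exact hfatou.trans hle1
      · rw [hκ, Real.sSup_of_not_bddAbove hbdd, hg0]
    · rw [Set.not_nonempty_iff_eq_empty] at hne
      rw [hκ, hne, Real.sSup_empty, hg0]
  have hρtop : g κ ≠ ⊤ := ne_top_of_le_ne_top ENNReal.one_ne_top hρ1
  set ρ := g κ with hρ
  -- QX is a probability measure
  haveI hQXprob : IsProbabilityMeasure QX := by
    constructor
    rw [hQX Set.univ MeasurableSet.univ]
    have : {ω : Ω | -X ω ∈ Set.univ} = Set.univ := by ext ω; simp
    rw [this, setLIntegral_univ, ← hg κ, ENNReal.inv_mul_cancel hρ0 hρtop]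
  -- convolution powers are probability measures
  have hconvprob : ∀ m, IsProbabilityMeasure (convPow QX m) := by
    intro m
    induction m with
    | zero => exact (by infer_instance : IsProbabilityMeasure (Measure.dirac (0:ℝ)))
    | succ m ih =>
      haveI := ih
      exact (by infer_instance : IsProbabilityMeasure ((convPow QX m).conv QX))
  -- one-step change of measure
  have key1 : ∀ h : ℝ → ℝ≥0∞, Measurable h →
      ∫⁻ x, h x ∂(P.map X)
        = ρ * ∫⁻ u, ENNReal.ofReal (Real.exp (-κ * u)) * h (-u) ∂QX := by
    intro h hh
    set w : Ω → ℝ≥0∞ := fun ω => ENNReal.ofReal (Real.exp (-κ * X ω)) with hw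
    have hwmeas : Measurable w := (he κ).comp hX
    have hQeq : QX = ρ⁻¹ • ((P.withDensity w).map fun ω => -X ω) := by
      ext B hB
      rw [hQX B hB, Measure.smul_apply, smul_eq_mul,
        Measure.map_apply (show Measurable fun ω => -X ω from hX.neg) hB,
        withDensity_apply _ ((show Measurable fun ω => -X ω from hX.neg) hB)]
      rfl
    have hmeasF : Measurable fun u : ℝ => ENNReal.ofReal (Real.exp (-κ * u)) * h (-u) :=
      (he κ).mul (hh.comp measurable_neg)
    have hWD : ∫⁻ a, ENNReal.ofReal (Real.exp (-κ * -X a)) * h (- -X a) ∂(P.withDensity w)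
        = ∫⁻ a, (w * fun ω => ENNReal.ofReal (Real.exp (-κ * -X ω)) * h (- -X ω)) a ∂P :=
      lintegral_withDensity_eq_lintegral_mul _ hwmeas (hmeasF.comp hX.neg)
    rw [hQeq, lintegral_smul_measure, smul_eq_mul, lintegral_map hmeasF (show Measurable fun ω => -X ω from hX.neg), hWD,
      lintegral_map hh hX]
    have hpt : ∀ ω, (w * fun ω => ENNReal.ofReal (Real.exp (-κ * -X ω)) * h (- -X ω)) ω
        = h (X ω) := by
      intro ω
      simp only [Pi.mul_apply, neg_neg, hw]
      rw [← mul_assoc, ← ENNReal.ofReal_mul (Real.exp_nonneg _), ← Real.exp_add]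
      have : -κ * X ω + -κ * -X ω = 0 := by ring
      rw [this, Real.exp_zero, ENNReal.ofReal_one, one_mul]
    rw [lintegral_congr hpt, ← mul_assoc, ENNReal.mul_inv_cancel hρ0 hρtop, one_mul]
  -- measurability of partial sums
  have hSmeas : ∀ m, Measurable (S m) := by
    intro m
    have : S m = fun ω => ∑ i ∈ Finset.range m, Xk i ω := funext (hS m)
    rw [this]
    exact Finset.measurable_sum _ fun i _ => hXkmeas i
  -- the main identity, by induction on the number of summands
  have main : ∀ m, ∀ f : ℝ → ℝ≥0∞, Measurable f →
      ∫⁻ ω, f (S m ω) ∂P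
        = ρ ^ m * ∫⁻ t, ENNReal.ofReal (Real.exp (-κ * t)) * f (-t) ∂(convPow QX m) := by
    intro m
    induction m with
    | zero =>
      intro f hf
      have hS0 : ∀ ω, S 0 ω = 0 := fun ω => by simp [hS]
      have hmeasF : Measurable fun t : ℝ => ENNReal.ofReal (Real.exp (-κ * t)) * f (-t) :=
        (he κ).mul (hf.comp measurable_neg)
      simp only [hS0, pow_zero, one_mul]
      show ∫⁻ _, f 0 ∂P = ∫⁻ t, ENNReal.ofReal (Real.exp (-κ * t)) * f (-t) ∂(Measure.dirac 0)
      rw [lintegral_const, lintegral_dirac' _ hmeasF]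
      simp
    | succ m ih =>
      intro f hf
      haveI := hconvprob m
      haveI : IsProbabilityMeasure (P.map (S m)) :=
        Measure.isProbabilityMeasure_map (hSmeas m).aemeasurable
      haveI : IsProbabilityMeasure (P.map (Xk m)) :=
        Measure.isProbabilityMeasure_map (hXkmeas m).aemeasurable
      have hSm : ∀ ω, S (m + 1) ω = S m ω + Xk m ω := fun ω => by
        rw [hS, hS, Finset.sum_range_succ]
      -- independence of `S m` and `Xk m`
      have hind : IndepFun (S m) (Xk m) P := by
        have h0 := hindep.indepFun_sum_range_succ hXkmeas m
        have : (∑ j ∈ Finset.range m, Xk j) = S m := by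
          funext ω
          rw [hS]
          simp
        rwa [this] at h0
      have hmap : P.map (fun ω => (S m ω, Xk m ω)) = (P.map (S m)).prod (P.map (Xk m)) :=
        (indepFun_iff_map_prod_eq_prod_map_map (hSmeas m).aemeasurable
          (hXkmeas m).aemeasurable).mp hind
      have hmeasprod : Measurable fun p : ℝ × ℝ => f (p.1 + p.2) :=
        hf.comp measurable_add
      calc ∫⁻ ω, f (S (m + 1) ω) ∂P
          = ∫⁻ ω, f (S m ω + Xk m ω) ∂P := by simp only [hSm]
        _ = ∫⁻ p : ℝ × ℝ, f (p.1 + p.2) ∂((P.map (S m)).prod (P.map (Xk m))) := by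
            rw [← hmap, lintegral_map hmeasprod ((hSmeas m).prodMk (hXkmeas m))]
        _ = ∫⁻ s, ∫⁻ x, f (s + x) ∂(P.map (Xk m)) ∂(P.map (S m)) :=
            lintegral_prod _ hmeasprod.aemeasurable
        _ = ∫⁻ s, ρ * ∫⁻ u, ENNReal.ofReal (Real.exp (-κ * u)) * f (s + -u) ∂QX
              ∂(P.map (S m)) := by
            refine lintegral_congr fun s => ?_
            rw [hident m]
            exact key1 (fun x => f (s + x)) (hf.comp (measurable_const.add measurable_id))
        _ = ρ * ∫⁻ s, ∫⁻ u, ENNReal.ofReal (Real.exp (-κ * u)) * f (s + -u) ∂QX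
              ∂(P.map (S m)) := by
            refine lintegral_const_mul _ (Measurable.lintegral_prod_right'
              (((he κ).comp measurable_snd).mul
                (hf.comp (measurable_fst.add measurable_snd.neg))))
        _ = ρ * ∫⁻ u, ∫⁻ s, ENNReal.ofReal (Real.exp (-κ * u)) * f (s + -u)
              ∂(P.map (S m)) ∂QX := by
            rw [lintegral_lintegral_swap]
            exact (((he κ).comp measurable_snd).mul
              (hf.comp (measurable_fst.add measurable_snd.neg))).aemeasurable
        _ = ρ * ∫⁻ u, ρ ^ m * ∫⁻ t,
              ENNReal.ofReal (Real.exp (-κ * (t + u))) * f (-(t + u))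
                ∂(convPow QX m) ∂QX := by
            refine congrArg (ρ * ·) (lintegral_congr fun u => ?_)
            have hmu : Measurable fun s : ℝ => f (s + -u) :=
              hf.comp (measurable_id.add_const (-u))
            have h3 : ∫⁻ s, ENNReal.ofReal (Real.exp (-κ * u)) * f (s + -u) ∂(P.map (S m))
                = ENNReal.ofReal (Real.exp (-κ * u)) * ∫⁻ s, f (s + -u) ∂(P.map (S m)) :=
              lintegral_const_mul _ hmu
            have h4 : ∫⁻ s, f (s + -u) ∂(P.map (S m)) = ∫⁻ ω, f (S m ω + -u) ∂P :=
              lintegral_map hmu (hSmeas m)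
            have h5 : ∫⁻ ω, f (S m ω + -u) ∂P
                = ρ ^ m * ∫⁻ t, ENNReal.ofReal (Real.exp (-κ * t)) * f (-t + -u)
                    ∂(convPow QX m) := ih _ hmu
            rw [h3, h4, h5, mul_left_comm]
            refine congrArg (ρ ^ m * ·) ?_
            have h6 : ∫⁻ t, ENNReal.ofReal (Real.exp (-κ * u)) *
                  (ENNReal.ofReal (Real.exp (-κ * t)) * f (-t + -u)) ∂(convPow QX m)
                = ENNReal.ofReal (Real.exp (-κ * u)) *
                  ∫⁻ t, ENNReal.ofReal (Real.exp (-κ * t)) * f (-t + -u) ∂(convPow QX m) :=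
              lintegral_const_mul _ ((he κ).mul (hf.comp (measurable_neg.add_const (-u))))
            rw [← h6]
            refine lintegral_congr fun t => ?_
            rw [← mul_assoc, ← ENNReal.ofReal_mul (Real.exp_nonneg _), ← Real.exp_add]
            have h1 : -κ * u + -κ * t = -κ * (t + u) := by ring
            have h2 : -t + -u = -(t + u) := by ring
            rw [h1, h2]
        _ = ρ ^ (m + 1) * ∫⁻ u, ∫⁻ t,
              ENNReal.ofReal (Real.exp (-κ * (t + u))) * f (-(t + u))
                ∂(convPow QX m) ∂QX := by
            rw [pow_succ, mul_comm (ρ ^ m) ρ, mul_assoc]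
            refine congrArg (ρ * ·) ?_
            exact lintegral_const_mul _ (Measurable.lintegral_prod_right'
              (((he κ).comp (measurable_snd.add measurable_fst)).mul
                (hf.comp (measurable_snd.add measurable_fst).neg)))
        _ = ρ ^ (m + 1) * ∫⁻ t, ENNReal.ofReal (Real.exp (-κ * t)) * f (-t)
              ∂(convPow QX (m + 1)) := by
            refine congrArg (ρ ^ (m + 1) * ·) ?_
            have hG : Measurable fun z : ℝ => ENNReal.ofReal (Real.exp (-κ * z)) * f (-z) :=
              (he κ).mul (hf.comp measurable_neg)
            have h7 : ∫⁻ z, ENNReal.ofReal (Real.exp (-κ * z)) * f (-z)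
                  ∂(convPow QX (m + 1))
                = ∫⁻ p : ℝ × ℝ, ENNReal.ofReal (Real.exp (-κ * (p.1 + p.2))) * f (-(p.1 + p.2))
                  ∂((convPow QX m).prod QX) := by
              show ∫⁻ z, ENNReal.ofReal (Real.exp (-κ * z)) * f (-z)
                ∂((convPow QX m).conv QX) = _
              rw [Measure.conv, lintegral_map hG measurable_add]
            have h8 : ∫⁻ p : ℝ × ℝ, ENNReal.ofReal (Real.exp (-κ * (p.1 + p.2)))
                  * f (-(p.1 + p.2)) ∂((convPow QX m).prod QX)
                = ∫⁻ u, ∫⁻ t, ENNReal.ofReal (Real.exp (-κ * (t + u))) * f (-(t + u))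
                  ∂(convPow QX m) ∂QX :=
              lintegral_prod_symm _ (((he κ).comp
                (measurable_fst.add measurable_snd)).mul
                (hf.comp (measurable_fst.add measurable_snd).neg)).aemeasurable
            rw [h7, h8]
  refine ⟨main n, ?_⟩
  intro x hx
  have h1 := main n ((Set.Iio (-x)).indicator fun _ => (1 : ℝ≥0∞))
    (measurable_one.indicator measurableSet_Iio)
  have hL : ∫⁻ ω, (Set.Iio (-x)).indicator (fun _ => (1 : ℝ≥0∞)) (S n ω) ∂P
      = P {ω | S n ω < -x} := by
    have hpt : ∀ ω, (Set.Iio (-x)).indicator (fun _ => (1 : ℝ≥0∞)) (S n ω)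
        = ({ω | S n ω < -x} : Set Ω).indicator (fun _ => (1 : ℝ≥0∞)) ω := by
      intro ω
      by_cases h : S n ω < -x <;>
        simp [Set.indicator_apply, Set.mem_Iio, Set.mem_setOf_eq, h]
    rw [lintegral_congr hpt, lintegral_indicator (show MeasurableSet {ω | S n ω < -x} from (hSmeas n) measurableSet_Iio),
      setLIntegral_one]
  have hR : ∀ t : ℝ, ENNReal.ofReal (Real.exp (-κ * t)) *
      (Set.Iio (-x)).indicator (fun _ => (1 : ℝ≥0∞)) (-t)
      = (Set.Ioi x).indicator (fun t => ENNReal.ofReal (Real.exp (-κ * t))) t := by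
    intro t
    simp only [Set.indicator_apply, Set.mem_Iio, Set.mem_Ioi]
    by_cases h : x < t
    · have h' : -t < -x := by linarith
      simp [h, h']
    · have h' : ¬ (-t < -x) := fun hc => h (by linarith)
      simp [h, h']
  rw [hL] at h1
  rw [h1, lintegral_congr hR, lintegral_indicator measurableSet_Ioi]

end
end

section
/- Let X be a real random variable with E X ∈ (0,∞] (the mean may be infinite), P(X < 0) > 0, and g(θ₀) < ∞ for some θ₀ > 0, where g(θ) = E[e^{-θX}]. Then κ = sup{θ > 0 : g(θ) < 1} satisfies 0 < κ < ∞, and ρ = g(κ) satisfies 0 < ρ ≤ 1. Moreover, if g(θ) < ∞ for all θ > 0, then ρ = 1. -/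
/-!
Truncating `X` at a level `M` with `E[min(X, M)] > 0` gives a variable whose moment generating
function is finite near `0`, with derivative `E[min(X, M)] > 0` there; since
`g(θ) ≤ E[exp(-θ min(X, M))]` for `θ ≥ 0`, this forces `g < 1` just to the right of `0`.
Markov's inequality on `{X ≤ -δ}` gives `g(θ) ≥ θ δ P(X ≤ -δ)`, so `g < 1` only on a bounded set.
By Fatou's lemma `g` is lower semicontinuous, whence `g(κ) ≤ 1`. If `g` is finite beyond `κ` and
`g(κ) < 1`, convexity of `g` on the chord from `κ` to `κ + 1` produces points `θ > κ` with
`g(θ) < 1`, contradicting the definition of `κ`.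
-/

open MeasureTheory ProbabilityTheory Filter Set Topology
open scoped ENNReal

noncomputable def laplaceTransform {Ω : Type*} [MeasurableSpace Ω] (X : Ω → ℝ) (P : Measure Ω)
    (θ : ℝ) : ℝ≥0∞ :=
  ∫⁻ ω, ENNReal.ofReal (Real.exp (-θ * X ω)) ∂P

section LaplaceTransform

variable {Ω : Type*} [MeasurableSpace Ω] {P : Measure Ω} {X : Ω → ℝ}

lemma measurable_ofReal_exp_neg_mul (hX : Measurable X) (θ : ℝ) :
    Measurable fun ω ↦ ENNReal.ofReal (Real.exp (-θ * X ω)) :=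
  ((hX.const_mul _).exp).ennreal_ofReal

lemma laplaceTransform_pos [NeZero P] (hX : Measurable X) (θ : ℝ) :
    0 < laplaceTransform X P θ := by
  rw [laplaceTransform, lintegral_pos_iff_support (measurable_ofReal_exp_neg_mul hX θ)]
  simp [Function.support, Real.exp_pos, NeZero.ne P]

lemma laplaceTransform_le_of_tendsto (hX : Measurable X) {u : ℕ → ℝ} {t : ℝ}
    (hu : Tendsto u atTop (𝓝 t)) {c : ℝ≥0∞} (hc : ∀ n, laplaceTransform X P (u n) ≤ c) :
    laplaceTransform X P t ≤ c := by
  have hpointwise : ∀ ω, Tendsto (fun n ↦ ENNReal.ofReal (Real.exp (-u n * X ω))) atTop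
      (𝓝 (ENNReal.ofReal (Real.exp (-t * X ω)))) := fun ω ↦
    ENNReal.tendsto_ofReal (((by fun_prop : Continuous fun θ : ℝ ↦ Real.exp (-θ * X ω)).tendsto
      t).comp hu)
  calc laplaceTransform X P t
      = ∫⁻ ω, liminf (fun n ↦ ENNReal.ofReal (Real.exp (-u n * X ω))) atTop ∂P := by
        simp only [laplaceTransform, (hpointwise _).liminf_eq]
    _ ≤ liminf (fun n ↦ laplaceTransform X P (u n)) atTop :=
        lintegral_liminf_le fun n ↦ measurable_ofReal_exp_neg_mul hX (u n)
    _ ≤ c := liminf_le_of_frequently_le' (Frequently.of_forall hc)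

lemma laplaceTransform_convexComb_le (hX : Measurable X) (a b : ℝ) {s : ℝ} (hs₀ : 0 ≤ s)
    (hs₁ : s ≤ 1) :
    laplaceTransform X P ((1 - s) * a + s * b) ≤
      ENNReal.ofReal (1 - s) * laplaceTransform X P a +
        ENNReal.ofReal s * laplaceTransform X P b := by
  have hpointwise : ∀ ω, ENNReal.ofReal (Real.exp (-((1 - s) * a + s * b) * X ω)) ≤
      ENNReal.ofReal (1 - s) * ENNReal.ofReal (Real.exp (-a * X ω)) +
        ENNReal.ofReal s * ENNReal.ofReal (Real.exp (-b * X ω)) := fun ω ↦ by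
    have hconv := convexOn_exp.2 (mem_univ (-a * X ω)) (mem_univ (-b * X ω))
      (sub_nonneg.2 hs₁) hs₀ (by ring)
    rw [smul_eq_mul, smul_eq_mul, show (1 - s) * (-a * X ω) + s * (-b * X ω) =
      -((1 - s) * a + s * b) * X ω by ring] at hconv
    rw [← ENNReal.ofReal_mul (sub_nonneg.2 hs₁), ← ENNReal.ofReal_mul hs₀,
      ← ENNReal.ofReal_add (by positivity) (by positivity)]
    exact ENNReal.ofReal_le_ofReal hconv
  calc laplaceTransform X P ((1 - s) * a + s * b)
      ≤ ∫⁻ ω, (ENNReal.ofReal (1 - s) * ENNReal.ofReal (Real.exp (-a * X ω)) +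
          ENNReal.ofReal s * ENNReal.ofReal (Real.exp (-b * X ω))) ∂P := lintegral_mono hpointwise
    _ = _ := by
      rw [lintegral_add_left ((measurable_ofReal_exp_neg_mul hX a).const_mul _),
        lintegral_const_mul _ (measurable_ofReal_exp_neg_mul hX a),
        lintegral_const_mul _ (measurable_ofReal_exp_neg_mul hX b)]
      rfl

lemma exists_gt_laplaceTransform_lt (hX : Measurable X) {a b : ℝ} (hab : a < b) {c : ℝ≥0∞}
    (ha : laplaceTransform X P a < c) (hb : laplaceTransform X P b ≠ ∞) :
    ∃ θ > a, laplaceTransform X P θ < c := by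
  have hs : Tendsto (fun s : ℝ ↦ s) (𝓝[>] 0) (𝓝 0) := tendsto_id.mono_left nhdsWithin_le_nhds
  have hofReal : Tendsto (fun s : ℝ ↦ ENNReal.ofReal s) (𝓝[>] 0) (𝓝 0) := by
    simpa using ENNReal.tendsto_ofReal hs
  have hofReal' : Tendsto (fun s : ℝ ↦ ENNReal.ofReal (1 - s)) (𝓝[>] 0) (𝓝 1) := by
    simpa using ENNReal.tendsto_ofReal ((tendsto_const_nhds (x := (1 : ℝ))).sub hs)
  have hchord : Tendsto (fun s : ℝ ↦ ENNReal.ofReal (1 - s) * laplaceTransform X P a +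
      ENNReal.ofReal s * laplaceTransform X P b) (𝓝[>] 0) (𝓝 (laplaceTransform X P a)) := by
    simpa using (ENNReal.Tendsto.mul_const hofReal' (Or.inl one_ne_zero)).add
      (ENNReal.Tendsto.mul_const hofReal (Or.inr hb))
  obtain ⟨s, hsc, hs₁, hs₀⟩ := ((hchord.eventually (gt_mem_nhds ha)).and
    (((eventually_lt_nhds one_pos).filter_mono nhdsWithin_le_nhds).and
      eventually_mem_nhdsWithin)).exists
  refine ⟨(1 - s) * a + s * b, by nlinarith [mem_Ioi.1 hs₀], ?_⟩
  exact (laplaceTransform_convexComb_le hX a b (le_of_lt hs₀) (le_of_lt hs₁)).trans_lt hsc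

lemma exists_measure_le_neg_pos (hneg : 0 < P {ω | X ω < 0}) :
    ∃ δ > 0, 0 < P {ω | X ω ≤ -δ} := by
  have hcover : {ω | X ω < 0} ⊆ ⋃ n : ℕ, {ω | X ω ≤ -(1 / (n + 1 : ℝ))} := fun ω hω ↦ by
    obtain ⟨n, hn⟩ := exists_nat_one_div_lt (neg_pos.2 (show X ω < 0 from hω))
    exact mem_iUnion.2 ⟨n, by simp only [mem_ofPred]; linarith⟩
  obtain ⟨n, hn⟩ := exists_measure_pos_of_not_measure_iUnion_null
    (hneg.trans_le (measure_mono hcover)).ne'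
  exact ⟨_, Nat.one_div_pos_of_nat, hn⟩

lemma bddAbove_setOf_laplaceTransform_lt_one [IsFiniteMeasure P] (hX : Measurable X)
    (hneg : 0 < P {ω | X ω < 0}) : BddAbove {θ | laplaceTransform X P θ < 1} := by
  obtain ⟨δ, hδ, hp⟩ := exists_measure_le_neg_pos hneg
  set p := P {ω | X ω ≤ -δ}
  have hpδ : 0 < δ * p.toReal := mul_pos hδ (ENNReal.toReal_pos hp.ne' (measure_ne_top _ _))
  refine ⟨1 / (δ * p.toReal), fun θ hθ ↦ ?_⟩
  rcases le_or_gt θ 0 with hθ₀ | hθ₀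
  · exact hθ₀.trans (by positivity)
  -- Markov's inequality, with `θ * δ ≤ -θ * X ≤ exp (-θ * X)` on `{X ≤ -δ}`
  have hmarkov : ENNReal.ofReal (θ * δ) * p ≤ laplaceTransform X P θ := by
    refine le_trans (mul_le_mul_right (measure_mono fun ω hω ↦ ?_) _)
      (mul_meas_ge_le_lintegral (measurable_ofReal_exp_neg_mul hX θ) _)
    have hω : X ω ≤ -δ := hω
    refine ENNReal.ofReal_le_ofReal ?_
    nlinarith [Real.add_one_le_exp (-θ * X ω)]
  have hlt := ENNReal.toReal_strict_mono ENNReal.one_ne_top (hmarkov.trans_lt hθ)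
  rw [ENNReal.toReal_mul, ENNReal.toReal_ofReal (by positivity), ENNReal.toReal_one] at hlt
  rw [le_div_iff₀ hpδ]
  linarith

lemma exists_nat_lt_lintegral_ofReal_min (hX : Measurable X) {c : ℝ≥0∞}
    (hc : c < ∫⁻ ω, ENNReal.ofReal (X ω) ∂P) :
    ∃ M : ℕ, c < ∫⁻ ω, ENNReal.ofReal (min (X ω) M) ∂P := by
  have hconv : Tendsto (fun n : ℕ ↦ ∫⁻ ω, ENNReal.ofReal (min (X ω) n) ∂P) atTop
      (𝓝 (∫⁻ ω, ENNReal.ofReal (X ω) ∂P)) :=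
    lintegral_tendsto_of_tendsto_of_monotone
      (fun n ↦ (hX.min measurable_const).ennreal_ofReal.aemeasurable)
      (ae_of_all _ fun ω i j hij ↦
        ENNReal.ofReal_le_ofReal (min_le_min_left _ (Nat.cast_le.2 hij)))
      (ae_of_all _ fun ω ↦ tendsto_const_nhds.congr' <|
        (eventually_ge_atTop ⌈X ω⌉₊).mono fun n hn ↦ by
          simp only [min_eq_left ((Nat.le_ceil _).trans (Nat.cast_le.2 hn))])
  exact (hconv.eventually (lt_mem_nhds hc)).exists

lemma integrable_exp_neg_mul_min [IsFiniteMeasure P] (hX : Measurable X) {θ : ℝ}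
    (hfin : laplaceTransform X P θ ≠ ∞) (M : ℝ) :
    Integrable (fun ω ↦ Real.exp (-θ * min (X ω) M)) P := by
  have hint : Integrable (fun ω ↦ Real.exp (-θ * X ω)) P :=
    (lintegral_ofReal_ne_top_iff_integrable (hX.const_mul _).exp.aestronglyMeasurable
      (ae_of_all _ fun _ ↦ (Real.exp_pos _).le)).1 hfin
  refine (hint.add (integrable_const (Real.exp (-θ * M)))).mono'
    ((hX.min measurable_const).const_mul _).exp.aestronglyMeasurable (ae_of_all _ fun ω ↦ ?_)
  rw [Real.norm_of_nonneg (Real.exp_pos _).le, Pi.add_apply]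
  rcases min_choice (X ω) M with h | h <;> rw [h] <;>
    linarith [Real.exp_pos (-θ * X ω), Real.exp_pos (-θ * M)]

lemma zero_mem_interior_integrableExpSet_of_le [IsFiniteMeasure P] {Y : Ω → ℝ}
    (hY : Measurable Y) {M θ : ℝ} (hYM : ∀ ω, Y ω ≤ M) (hθ : 0 < θ)
    (hint : Integrable (fun ω ↦ Real.exp (-θ * Y ω)) P) :
    0 ∈ interior (integrableExpSet Y P) := by
  have hone : Integrable (fun ω ↦ Real.exp (1 * Y ω)) P :=
    Integrable.of_bound (hY.const_mul 1).exp.aestronglyMeasurable (Real.exp M)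
      (ae_of_all _ fun ω ↦ by
        rw [Real.norm_of_nonneg (Real.exp_pos _).le, one_mul]
        exact Real.exp_le_exp.2 (hYM ω))
  have hIoo : Ioo (-θ) 1 ⊆ integrableExpSet Y P := fun t ht ↦
    integrable_exp_mul_of_le_of_le hint hone ht.1.le ht.2.le
  exact mem_interior_iff_mem_nhds.2 (mem_of_superset (Ioo_mem_nhds (by linarith) one_pos) hIoo)

lemma integral_pos_of_lintegral_ofReal_neg_lt {Y : Ω → ℝ} (hY : Integrable Y P)
    (h : ∫⁻ ω, ENNReal.ofReal (-Y ω) ∂P < ∫⁻ ω, ENNReal.ofReal (Y ω) ∂P) :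
    0 < ∫ ω, Y ω ∂P := by
  rw [integral_eq_lintegral_pos_part_sub_lintegral_neg_part hY, sub_pos]
  exact ENNReal.toReal_strict_mono ((lintegral_ofReal_le_lintegral_enorm Y).trans_lt hY.2).ne h

lemma exists_neg_mgf_lt_one [IsProbabilityMeasure P] {Y : Ω → ℝ}
    (h0 : 0 ∈ interior (integrableExpSet Y P)) (hmean : 0 < P[Y]) :
    ∃ t < 0, t ∈ integrableExpSet Y P ∧ mgf Y P t < 1 := by
  have hderiv : HasDerivAt (mgf Y P) P[Y] 0 := by
    simpa [deriv_mgf_zero h0] using (differentiableAt_mgf h0).hasDerivAt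
  have hnear : ∀ᶠ t in 𝓝[<] 0, t ∈ integrableExpSet Y P :=
    mem_nhdsWithin_of_mem_nhds (mem_interior_iff_mem_nhds.1 h0)
  obtain ⟨t, hslope, hmem, ht⟩ := ((hderiv.tendsto_slope_zero_left.eventually
    (lt_mem_nhds hmean)).and (hnear.and eventually_mem_nhdsWithin)).exists
  refine ⟨t, ht, hmem, ?_⟩
  simp only [zero_add, mgf_zero, smul_eq_mul] at hslope
  exact sub_neg.1 (neg_of_mul_pos_right hslope (inv_nonpos.2 (le_of_lt ht)))

lemma laplaceTransform_le_ofReal_mgf {Y : Ω → ℝ} (hYX : ∀ ω, Y ω ≤ X ω) {θ : ℝ} (hθ : 0 ≤ θ)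
    (hint : -θ ∈ integrableExpSet Y P) :
    laplaceTransform X P θ ≤ ENNReal.ofReal (mgf Y P (-θ)) := by
  rw [mgf, ofReal_integral_eq_lintegral_ofReal hint (ae_of_all _ fun _ ↦ (Real.exp_pos _).le)]
  exact lintegral_mono fun ω ↦ ENNReal.ofReal_le_ofReal (Real.exp_le_exp.2 (by nlinarith [hYX ω]))

lemma exists_pos_laplaceTransform_lt_one [IsProbabilityMeasure P] (hX : Measurable X)
    (hmean : ∫⁻ ω, ENNReal.ofReal (-X ω) ∂P < ∫⁻ ω, ENNReal.ofReal (X ω) ∂P)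
    {θ₀ : ℝ} (hθ₀ : 0 < θ₀) (hfin : laplaceTransform X P θ₀ ≠ ∞) :
    ∃ θ > 0, laplaceTransform X P θ < 1 := by
  obtain ⟨M, hM⟩ := exists_nat_lt_lintegral_ofReal_min hX hmean
  set Y := fun ω ↦ min (X ω) (M : ℝ) with hY
  have h0 : 0 ∈ interior (integrableExpSet Y P) :=
    zero_mem_interior_integrableExpSet_of_le (hX.min measurable_const) (fun ω ↦ min_le_right _ _)
      hθ₀ (integrable_exp_neg_mul_min hX hfin M)
  have hnegY : ∀ ω, ENNReal.ofReal (-Y ω) = ENNReal.ofReal (-X ω) := fun ω ↦ by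
    rcases le_total (X ω) M with h | h
    · simp only [hY, min_eq_left h]
    · simp only [hY, min_eq_right h]
      rw [ENNReal.ofReal_of_nonpos (by simp),
        ENNReal.ofReal_of_nonpos (by linarith [M.cast_nonneg (α := ℝ)])]
  have hmeanY : 0 < P[Y] := integral_pos_of_lintegral_ofReal_neg_lt
    (integrable_of_mem_interior_integrableExpSet h0) (by simpa only [hnegY] using hM)
  obtain ⟨t, ht, hint, hmgf⟩ := exists_neg_mgf_lt_one h0 hmeanY
  refine ⟨-t, neg_pos.2 ht, (laplaceTransform_le_ofReal_mgf (fun ω ↦ min_le_left _ _)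
    (neg_nonneg.2 ht.le) (by rwa [neg_neg])).trans_lt ?_⟩
  rwa [neg_neg, ENNReal.ofReal_lt_one]

end LaplaceTransform

theorem kappa_pos_finite_and_rho_general
    {Ω : Type*} [MeasurableSpace Ω] (P : Measure Ω) [IsProbabilityMeasure P]
    (X : Ω → ℝ) (hX : Measurable X)
    (g : ℝ → ℝ≥0∞) (hg : ∀ θ, g θ = ∫⁻ ω, ENNReal.ofReal (Real.exp (-θ * X ω)) ∂P)
    -- `E X ∈ (0, ∞]`
    (hmean : ∫⁻ ω, ENNReal.ofReal (-X ω) ∂P < ∫⁻ ω, ENNReal.ofReal (X ω) ∂P)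
    (hXneg : 0 < P {ω | X ω < 0})
    (hθ : ∃ θ₀ > 0, g θ₀ < ⊤) :
    ({θ : ℝ | 0 < θ ∧ g θ < 1}).Nonempty ∧
    BddAbove {θ : ℝ | 0 < θ ∧ g θ < 1} ∧
    0 < sSup {θ : ℝ | 0 < θ ∧ g θ < 1} ∧
    0 < g (sSup {θ : ℝ | 0 < θ ∧ g θ < 1}) ∧
    g (sSup {θ : ℝ | 0 < θ ∧ g θ < 1}) ≤ 1 ∧
    ((∀ θ > 0, g θ < ⊤) → g (sSup {θ : ℝ | 0 < θ ∧ g θ < 1}) = 1) := by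
  obtain rfl : g = laplaceTransform X P := funext hg
  obtain ⟨θ₀, hθ₀, hfin⟩ := hθ
  obtain ⟨θ₁, hθ₁, hθ₁S⟩ := exists_pos_laplaceTransform_lt_one hX hmean hθ₀ hfin.ne
  set S := {θ : ℝ | 0 < θ ∧ laplaceTransform X P θ < 1}
  have hne : S.Nonempty := ⟨θ₁, hθ₁, hθ₁S⟩
  have hbdd : BddAbove S :=
    (bddAbove_setOf_laplaceTransform_lt_one hX hXneg).mono fun θ hθ ↦ hθ.2
  have hκ : 0 < sSup S := hθ₁.trans_le (le_csSup hbdd ⟨hθ₁, hθ₁S⟩)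
  have hρ_le : laplaceTransform X P (sSup S) ≤ 1 := by
    obtain ⟨u, -, hu, huS⟩ := exists_seq_tendsto_sSup hne hbdd
    exact laplaceTransform_le_of_tendsto hX hu fun n ↦ (huS n).2.le
  refine ⟨hne, hbdd, hκ, laplaceTransform_pos hX _, hρ_le, fun hfin_all ↦ ?_⟩
  refine hρ_le.antisymm (not_lt.1 fun hρ_lt ↦ ?_)
  obtain ⟨θ, hθκ, hθ1⟩ :=
    exists_gt_laplaceTransform_lt hX (lt_add_one _) hρ_lt (hfin_all _ (by linarith)).ne
  exact (le_csSup hbdd ⟨hκ.trans hθκ, hθ1⟩).not_gt hθκ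

/-- Under the standing assumptions (`E X ∈ (0,∞]`, `P(X<0) > 0`, `g(θ₀) < ∞` for some
`θ₀ > 0`), the set `{θ > 0 : g(θ) < 1}` is nonempty and bounded above, its supremum `κ`
satisfies `0 < κ < ∞`, and `ρ = g(κ)` satisfies `0 < ρ ≤ 1`; moreover if `g` is finite
everywhere on `(0,∞)` then `ρ = 1`. -/
theorem kappa_pos_finite_and_rho
    {Ω : Type*} [MeasurableSpace Ω] (P : Measure Ω) [IsProbabilityMeasure P]
    (X : Ω → ℝ) (hX : Measurable X)
    (g : ℝ → ℝ≥0∞) (hg : ∀ θ, g θ = ∫⁻ ω, ENNReal.ofReal (Real.exp (-θ * X ω)) ∂P)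
    -- `E X ∈ (0, ∞]`
    (hneg : ∫⁻ ω, ENNReal.ofReal (-X ω) ∂P < ⊤)
    (hmean : ∫⁻ ω, ENNReal.ofReal (-X ω) ∂P < ∫⁻ ω, ENNReal.ofReal (X ω) ∂P)
    (hXneg : 0 < P {ω | X ω < 0})
    (hθ : ∃ θ₀ > 0, g θ₀ < ⊤) :
    ({θ : ℝ | 0 < θ ∧ g θ < 1}).Nonempty ∧
    BddAbove {θ : ℝ | 0 < θ ∧ g θ < 1} ∧
    0 < sSup {θ : ℝ | 0 < θ ∧ g θ < 1} ∧
    0 < g (sSup {θ : ℝ | 0 < θ ∧ g θ < 1}) ∧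
    g (sSup {θ : ℝ | 0 < θ ∧ g θ < 1}) ≤ 1 ∧
    ((∀ θ > 0, g θ < ⊤) → g (sSup {θ : ℝ | 0 < θ ∧ g θ < 1}) = 1) :=
  kappa_pos_finite_and_rho_general P X hX g hg hmean hXneg hθ
end

section
/- Let X be a real random variable with E X ∈ (0,∞], P(X < 0) > 0, g(θ₀) < ∞ for some θ₀ > 0, where g(θ) = E[e^{-θX}], and suppose ρ = g(κ) = 1 where κ = sup{θ > 0 : g(θ) < 1}. Then E[(-X) e^{-κX}] ∈ (0,∞]; that is, g'(κ) is strictly positive but possibly infinite. -/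
/-!
Since `g(κ) = 1`, the point `κ` lies strictly to the right of some `θ > 0` with `g(θ) < 1`, and
convexity of `θ ↦ e^{-θx}` gives the tangent-line bound
`e^{-θx} ≥ e^{-κx} + (κ - θ) x e^{-κx}`. Integrating it,
`1 + (κ - θ) E[X⁺ e^{-κX}] ≤ g(θ) + (κ - θ) E[X⁻ e^{-κX}]`, and as `g(θ) < 1` while
`E[X⁺ e^{-κX}] ≤ 1/κ` is finite, the negative part wins.

Such a `θ` exists because `g` has slope `-E X < 0` at `0⁺`: for a truncation `Y = min(X, c)` with
`E Y > 0`, the moment generating function of `-Y` is finite around `0`, hence differentiable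
there with derivative `-E Y`, and it dominates `g`. That `κ` is finite, i.e. `{θ > 0 | g θ < 1}` is
bounded, follows from `g(θ) ≥ e^{θε} P(X < -ε)`.
-/

open MeasureTheory ProbabilityTheory Filter Set Topology
open scoped ENNReal

lemma Real.exp_neg_mul_add_sub_mul_le (θ κ x : ℝ) :
    Real.exp (-κ * x) + (κ - θ) * (x * Real.exp (-κ * x)) ≤ Real.exp (-θ * x) :=
  calc Real.exp (-κ * x) + (κ - θ) * (x * Real.exp (-κ * x))
      = ((κ - θ) * x + 1) * Real.exp (-κ * x) := by ring
    _ ≤ Real.exp ((κ - θ) * x) * Real.exp (-κ * x) := by gcongr; exact Real.add_one_le_exp _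
    _ = Real.exp (-θ * x) := by rw [← Real.exp_add]; ring_nf

lemma Real.mul_exp_neg_mul_le_inv {κ : ℝ} (hκ : 0 < κ) (x : ℝ) :
    x * Real.exp (-κ * x) ≤ κ⁻¹ := by
  rw [← one_div, le_div_iff₀ hκ]
  calc x * Real.exp (-κ * x) * κ ≤ (κ * x + 1) * Real.exp (-κ * x) := by
        nlinarith [Real.exp_pos (-κ * x)]
    _ ≤ Real.exp (κ * x) * Real.exp (-κ * x) := by gcongr; exact Real.add_one_le_exp _
    _ = 1 := by rw [← Real.exp_add]; simp

lemma ENNReal.ofReal_add_ofReal_le_of_add_le {u v w : ℝ} (hu : 0 ≤ u) (h : u + w ≤ v) :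
    ENNReal.ofReal u + ENNReal.ofReal w ≤ ENNReal.ofReal v + ENNReal.ofReal (-w) := by
  rcases le_total 0 w with hw | hw
  · rw [← ENNReal.ofReal_add hu hw]
    exact (ENNReal.ofReal_le_ofReal h).trans le_self_add
  · rw [ENNReal.ofReal_of_nonpos hw, add_zero]
    exact (ENNReal.ofReal_le_ofReal (by linarith)).trans ENNReal.ofReal_add_le

lemma ENNReal.lt_of_add_mul_le_add_mul {a b c x y : ℝ≥0∞} (hba : b < a)
    (hc : c ≠ ∞) (hx : x ≠ ∞) (h : a + c * x ≤ b + c * y) : x < y := by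
  by_contra! hyx
  have hcx : c * x ≠ ∞ := ENNReal.mul_ne_top hc hx
  have := calc a + c * x ≤ b + c * y := h
    _ ≤ b + c * x := by gcongr
    _ < a + c * x := ENNReal.add_lt_add_right hcx hba
  exact this.false

section

variable {Ω : Type*} [MeasurableSpace Ω] {μ : Measure Ω} {X : Ω → ℝ}

lemma lintegral_exp_neg_mul_add_le (hX : Measurable X) {θ κ : ℝ} (hθκ : θ ≤ κ) :
    ∫⁻ ω, ENNReal.ofReal (Real.exp (-κ * X ω)) ∂μ
        + ENNReal.ofReal (κ - θ) * ∫⁻ ω, ENNReal.ofReal (X ω * Real.exp (-κ * X ω)) ∂μ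
      ≤ ∫⁻ ω, ENNReal.ofReal (Real.exp (-θ * X ω)) ∂μ
        + ENNReal.ofReal (κ - θ) * ∫⁻ ω, ENNReal.ofReal (-X ω * Real.exp (-κ * X ω)) ∂μ := by
  have hexp : ∀ a : ℝ, Measurable fun ω ↦ Real.exp (a * X ω) := fun a ↦ (hX.const_mul a).exp
  rw [← lintegral_const_mul' _ _ ENNReal.ofReal_ne_top,
    ← lintegral_const_mul' _ _ ENNReal.ofReal_ne_top,
    ← lintegral_add_left (hexp _).ennreal_ofReal, ← lintegral_add_left (hexp _).ennreal_ofReal]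
  refine lintegral_mono fun ω ↦ ?_
  rw [← ENNReal.ofReal_mul (sub_nonneg.2 hθκ), ← ENNReal.ofReal_mul (sub_nonneg.2 hθκ)]
  simpa only [mul_neg, neg_mul] using ENNReal.ofReal_add_ofReal_le_of_add_le (Real.exp_pos _).le
    (Real.exp_neg_mul_add_sub_mul_le θ κ (X ω))

lemma lintegral_mul_exp_neg_mul_lt_top [IsFiniteMeasure μ] {κ : ℝ} (hκ : 0 < κ) :
    ∫⁻ ω, ENNReal.ofReal (X ω * Real.exp (-κ * X ω)) ∂μ < ∞ :=
  (lintegral_mono fun ω ↦ ENNReal.ofReal_le_ofReal (Real.mul_exp_neg_mul_le_inv hκ (X ω))).trans_lt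
    (by simpa using ENNReal.mul_lt_top ENNReal.ofReal_lt_top (measure_lt_top μ univ))

lemma exists_pos_measure_lt_neg (h : 0 < μ {ω | X ω < 0}) :
    ∃ ε > 0, 0 < μ {ω | X ω < -ε} := by
  have hsub : {ω | X ω < 0} ⊆ ⋃ n : ℕ, {ω | X ω < -(1 / (n + 1))} := fun ω hω ↦ by
    obtain ⟨n, hn⟩ := exists_nat_one_div_lt (neg_pos.2 hω : (0 : ℝ) < -X ω)
    exact mem_iUnion.2 ⟨n, show X ω < -(1 / (n + 1)) by linarith⟩
  obtain ⟨n, hn⟩ :=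
    exists_measure_pos_of_not_measure_iUnion_null (h.trans_le (measure_mono hsub)).ne'
  exact ⟨1 / (n + 1), by positivity, hn⟩

lemma bddAbove_setOf_lintegral_exp_neg_mul_lt_one [IsFiniteMeasure μ] (hX : Measurable X)
    (hneg : 0 < μ {ω | X ω < 0}) :
    BddAbove {θ | 0 < θ ∧ ∫⁻ ω, ENNReal.ofReal (Real.exp (-θ * X ω)) ∂μ < 1} := by
  obtain ⟨ε, hε, hp⟩ := exists_pos_measure_lt_neg hneg
  set s := {ω | X ω < -ε}
  have hp' : 0 < μ.real s := ENNReal.toReal_pos hp.ne' (measure_ne_top μ s)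
  refine ⟨(ε * μ.real s)⁻¹, fun θ ⟨hθ, hlt⟩ ↦ ?_⟩
  have hmarkov : ENNReal.ofReal (Real.exp (θ * ε) * μ.real s) ≤ 1 := by
    rw [ENNReal.ofReal_mul (Real.exp_pos _).le, ofReal_measureReal]
    refine le_trans ?_ hlt.le
    refine le_trans ?_ (mul_meas_ge_le_lintegral₀
      (hX.const_mul _).exp.ennreal_ofReal.aemeasurable (ENNReal.ofReal (Real.exp (θ * ε))))
    gcongr
    intro ω (hω : X ω < -ε)
    exact ENNReal.ofReal_le_ofReal (Real.exp_le_exp.2 (by nlinarith))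
  rw [ENNReal.ofReal_le_one] at hmarkov
  rw [← one_div, le_div_iff₀ (by positivity)]
  nlinarith [Real.add_one_le_exp (θ * ε)]

lemma exists_integral_min_pos [IsFiniteMeasure μ] (hX : Measurable X)
    (hneg : ∫⁻ ω, ENNReal.ofReal (-X ω) ∂μ < ∞)
    (hmean : ∫⁻ ω, ENNReal.ofReal (-X ω) ∂μ < ∫⁻ ω, ENNReal.ofReal (X ω) ∂μ) :
    ∃ c : ℝ, Integrable (fun ω ↦ min (X ω) c) μ ∧ 0 < ∫ ω, min (X ω) c ∂μ := by
  have hsup : ∀ ω, ⨆ n : ℕ, ENNReal.ofReal (min (X ω) n) = ENNReal.ofReal (X ω) := fun ω ↦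
    le_antisymm (iSup_le fun n ↦ ENNReal.ofReal_le_ofReal (min_le_left _ _))
      (le_iSup_of_le ⌈X ω⌉₊ (by rw [min_eq_left (Nat.le_ceil _)]))
  obtain ⟨n, hn⟩ : ∃ n : ℕ,
      ∫⁻ ω, ENNReal.ofReal (-X ω) ∂μ < ∫⁻ ω, ENNReal.ofReal (min (X ω) n) ∂μ := by
    rw [← lt_iSup_iff, ← lintegral_iSup (fun n ↦ (hX.min measurable_const).ennreal_ofReal)
      (fun m n hmn ω ↦ ENNReal.ofReal_le_ofReal (min_le_min_left _ (Nat.cast_le.2 hmn)))]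
    simpa only [hsup] using hmean
  have hn₀ : (0 : ℝ) ≤ n := n.cast_nonneg
  have hint : Integrable (fun ω ↦ min (X ω) n) μ := by
    refine ((integrable_const (n : ℝ)).add (integrable_toReal_of_lintegral_ne_top
      hX.neg.ennreal_ofReal.aemeasurable hneg.ne)).mono'
      (hX.min measurable_const).aestronglyMeasurable (ae_of_all _ fun ω ↦ ?_)
    rw [Pi.add_apply, Pi.neg_apply, Real.norm_eq_abs, ENNReal.toReal_ofReal', abs_le]
    exact ⟨le_min (by linarith [le_max_left (-X ω) 0]) (by linarith [le_max_right (-X ω) 0]),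
      by linarith [min_le_right (X ω) n, le_max_right (-X ω) 0]⟩
  have hnegpart : ∀ ω, ENNReal.ofReal (-min (X ω) n) = ENNReal.ofReal (-X ω) := fun ω ↦ by
    rcases le_total (X ω) n with h | h
    · rw [min_eq_left h]
    · rw [min_eq_right h, ENNReal.ofReal_of_nonpos (by linarith),
        ENNReal.ofReal_of_nonpos (by linarith)]
  refine ⟨n, hint, ?_⟩
  rw [integral_eq_lintegral_pos_part_sub_lintegral_neg_part hint, sub_pos]
  simp only [hnegpart]
  exact (ENNReal.toReal_lt_toReal hneg.ne hint.lintegral_lt_top.ne).2 hn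

lemma zero_mem_interior_integrableExpSet {s t : ℝ} (hs : s < 0) (ht : 0 < t)
    (his : Integrable (fun ω ↦ Real.exp (s * X ω)) μ)
    (hit : Integrable (fun ω ↦ Real.exp (t * X ω)) μ) :
    0 ∈ interior (integrableExpSet X μ) :=
  mem_interior_iff_mem_nhds.2 <| mem_of_superset (Ioo_mem_nhds hs ht) fun _ hu ↦
    integrable_exp_mul_of_le_of_le his hit hu.1.le hu.2.le

lemma eventually_mgf_lt_one [IsProbabilityMeasure μ] (h0 : 0 ∈ interior (integrableExpSet X μ))
    (hX : μ[X] < 0) : ∀ᶠ t in 𝓝[>] 0, mgf X μ t < 1 := by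
  have hderiv : HasDerivAt (mgf X μ) μ[X] 0 := by simpa using hasDerivAt_mgf h0
  filter_upwards [(hderiv.hasDerivWithinAt (s := Ioi 0)).limsup_slope_le' (by simp) hX,
    self_mem_nhdsWithin] with t hslope (ht : 0 < t)
  rwa [slope_def_field, mgf_zero, sub_zero, div_lt_iff₀ ht, zero_mul, sub_neg] at hslope

lemma exists_lintegral_exp_neg_mul_lt_one [IsProbabilityMeasure μ] (hX : Measurable X)
    (hneg : ∫⁻ ω, ENNReal.ofReal (-X ω) ∂μ < ∞)
    (hmean : ∫⁻ ω, ENNReal.ofReal (-X ω) ∂μ < ∫⁻ ω, ENNReal.ofReal (X ω) ∂μ)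
    {θ₀ : ℝ} (hθ₀ : 0 < θ₀) (hfin : ∫⁻ ω, ENNReal.ofReal (Real.exp (-θ₀ * X ω)) ∂μ < ∞) :
    ∃ θ > 0, ∫⁻ ω, ENNReal.ofReal (Real.exp (-θ * X ω)) ∂μ < 1 := by
  obtain ⟨c, hint, hpos⟩ := exists_integral_min_pos hX hneg hmean
  set Z := fun ω ↦ -min (X ω) c
  have hZ : Measurable Z := (hX.min measurable_const).neg
  have h0 : 0 ∈ interior (integrableExpSet Z μ) := by
    refine zero_mem_interior_integrableExpSet neg_one_lt_zero hθ₀ ?_ ?_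
    · refine .of_bound (hZ.const_mul _).exp.aestronglyMeasurable (Real.exp c)
        (ae_of_all _ fun ω ↦ ?_)
      simp only [Z, Real.norm_eq_abs, Real.abs_exp, neg_one_mul, neg_neg]
      exact Real.exp_le_exp.2 (min_le_right _ _)
    · have hexp : Integrable (fun ω ↦ Real.exp (-θ₀ * X ω)) μ :=
        (lintegral_ofReal_ne_top_iff_integrable (hX.const_mul _).exp.aestronglyMeasurable
          (ae_of_all _ fun _ ↦ (Real.exp_pos _).le)).1 hfin.ne
      refine (hexp.add (integrable_const (Real.exp (-θ₀ * c)))).mono'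
        (hZ.const_mul _).exp.aestronglyMeasurable (ae_of_all _ fun ω ↦ ?_)
      simp only [Z, Pi.add_apply, Real.norm_eq_abs, Real.abs_exp, mul_neg, ← neg_mul]
      rcases min_cases (X ω) c with ⟨h, -⟩ | ⟨h, -⟩ <;> rw [h] <;>
        linarith [Real.exp_pos (-θ₀ * X ω), Real.exp_pos (-θ₀ * c)]
  have hZmean : μ[Z] < 0 := by rw [integral_neg]; linarith
  obtain ⟨θ, ⟨hlt, hθint⟩, hθ⟩ := ((eventually_mgf_lt_one h0 hZmean).and
    (nhdsWithin_le_nhds (isOpen_interior.mem_nhds h0))).and self_mem_nhdsWithin |>.exists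
  refine ⟨θ, hθ, ?_⟩
  calc ∫⁻ ω, ENNReal.ofReal (Real.exp (-θ * X ω)) ∂μ
      ≤ ∫⁻ ω, ENNReal.ofReal (Real.exp (θ * Z ω)) ∂μ :=
        lintegral_mono fun ω ↦ ENNReal.ofReal_le_ofReal <| Real.exp_le_exp.2 <| by
          simp only [Z]; nlinarith [min_le_left (X ω) c, (hθ : 0 < θ)]
    _ = ENNReal.ofReal (mgf Z μ θ) := (ofReal_integral_eq_lintegral_ofReal
        (integrable_of_mem_integrableExpSet (interior_subset hθint))
        (ae_of_all _ fun _ ↦ (Real.exp_pos _).le)).symm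
    _ < 1 := ENNReal.ofReal_lt_one.2 hlt

end

/-- If `ρ = g(κ) = 1`, then `g'(κ) = E[(-X) e^{-κX}]` is strictly positive (but possibly
infinite); here the expectation is expressed as the difference of the positive and negative
parts in `ℝ≥0∞`. -/
theorem gderiv_pos
    {Ω : Type*} [MeasurableSpace Ω] (P : Measure Ω) [IsProbabilityMeasure P]
    (X : Ω → ℝ) (hX : Measurable X)
    (g : ℝ → ℝ≥0∞) (hg : ∀ θ, g θ = ∫⁻ ω, ENNReal.ofReal (Real.exp (-θ * X ω)) ∂P)
    -- `E X ∈ (0, ∞]`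
    (hneg : ∫⁻ ω, ENNReal.ofReal (-X ω) ∂P < ⊤)
    (hmean : ∫⁻ ω, ENNReal.ofReal (-X ω) ∂P < ∫⁻ ω, ENNReal.ofReal (X ω) ∂P)
    (hXneg : 0 < P {ω | X ω < 0})
    (hθ : ∃ θ₀ > 0, g θ₀ < ⊤)
    (κ : ℝ) (hκ : κ = sSup {θ : ℝ | 0 < θ ∧ g θ < 1})
    (hρ : g κ = 1) :
    0 < ∫⁻ ω, ENNReal.ofReal (-X ω * Real.exp (-κ * X ω)) ∂P
          - ∫⁻ ω, ENNReal.ofReal (X ω * Real.exp (-κ * X ω)) ∂P := by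
  obtain rfl : g = fun θ ↦ ∫⁻ ω, ENNReal.ofReal (Real.exp (-θ * X ω)) ∂P := funext hg
  obtain ⟨θ₀, hθ₀, hfin⟩ := hθ
  obtain ⟨θ, hθ, hθlt⟩ := exists_lintegral_exp_neg_mul_lt_one hX hneg hmean hθ₀ hfin
  have hθκ : θ < κ := by
    refine lt_of_le_of_ne (hκ ▸ le_csSup (bddAbove_setOf_lintegral_exp_neg_mul_lt_one hX hXneg)
      ⟨hθ, hθlt⟩) ?_
    rintro rfl
    exact hθlt.ne hρ
  rw [tsub_pos_iff_lt]
  refine ENNReal.lt_of_add_mul_le_add_mul (c := ENNReal.ofReal (κ - θ)) hθlt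
    ENNReal.ofReal_ne_top (lintegral_mul_exp_neg_mul_lt_top (hθ.trans hθκ)).ne ?_
  simpa only [hρ] using lintegral_exp_neg_mul_add_le (μ := P) hX hθκ.le
end

section
/- Let ν be a measure on the Borel sets of ℝ which is finite on bounded sets, such that ν((x, x+1]) > 0 for all sufficiently large x and ν((x+s, x+s+1]) / ν((x, x+1]) → 1 as x → ∞ uniformly in s ∈ [0,1]. Then for every ε > 0 and C > 1 there exists x₀ such that for all x > x₀ and all h > 0, ν((x, x+h]) ≤ C ⌈h⌉ e^{ε ⌈h⌉} ν((x, x+1]). -/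
/-! Applied at `s = 1`, the uniform ratio limit says that the mass `f y = ν((y, y+1])` of unit
intervals is eventually positive and grows by at most a factor `e^ε` per unit step. Covering
`(x, x+h]` by `⌈h⌉` unit intervals then gives `ν((x, x+h]) ≤ ⌈h⌉ e^{ε⌈h⌉} f x`. -/

open MeasureTheory Filter Set Topology
open scoped ENNReal

theorem measure_Ioc_add_natCast_le_sum (ν : Measure ℝ) (x : ℝ) (n : ℕ) :
    ν (Ioc x (x + n)) ≤ ∑ k ∈ Finset.range n, ν (Ioc (x + k) (x + k + 1)) := by
  induction n with
  | zero => simp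
  | succ n ih =>
    have hsplit : Ioc x (x + n) ∪ Ioc (x + n) (x + n + 1) = Ioc x (x + (n + 1 : ℕ)) := by
      rw [Ioc_union_Ioc_eq_Ioc (by simp) (by simp)]
      push_cast
      ring_nf
    rw [Finset.sum_range_succ, ← hsplit]
    exact (measure_union_le _ _).trans (by gcongr)

theorem toReal_measure_Ioc_le_sum (ν : Measure ℝ) {x t : ℝ} {n : ℕ} (ht : t ≤ x + n)
    (hfin : ∀ k < n, ν (Ioc (x + k) (x + k + 1)) ≠ ∞) :
    (ν (Ioc x t)).toReal ≤ ∑ k ∈ Finset.range n, (ν (Ioc (x + k) (x + k + 1))).toReal := by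
  have hfin' : ∀ k ∈ Finset.range n, ν (Ioc (x + k) (x + k + 1)) ≠ ∞ :=
    fun k hk => hfin k (Finset.mem_range.1 hk)
  rw [← ENNReal.toReal_sum hfin']
  refine ENNReal.toReal_mono (ENNReal.sum_ne_top.2 hfin') ?_
  exact (measure_mono (Ioc_subset_Ioc_right ht)).trans (measure_Ioc_add_natCast_le_sum ν x n)

theorem le_pow_mul_of_forall_succ_le {f : ℝ → ℝ} {a q : ℝ} (hq : 0 ≤ q)
    (hstep : ∀ y ≥ a, f (y + 1) ≤ q * f y) {x : ℝ} (hx : a ≤ x) (k : ℕ) :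
    f (x + k) ≤ q ^ k * f x := by
  induction k with
  | zero => simp
  | succ k ih =>
    calc f (x + (k + 1 : ℕ)) = f (x + k + 1) := by push_cast; ring_nf
      _ ≤ q * f (x + k) := hstep _ (by linarith [(Nat.cast_nonneg k : (0 : ℝ) ≤ k)])
      _ ≤ q * (q ^ k * f x) := by gcongr
      _ = q ^ (k + 1) * f x := by ring

theorem sum_range_le_mul_pow_mul_of_forall_succ_le {f : ℝ → ℝ} {a q : ℝ} (hq : 1 ≤ q)
    (hstep : ∀ y ≥ a, f (y + 1) ≤ q * f y) {x : ℝ} (hx : a ≤ x) (hfx : 0 ≤ f x) (n : ℕ) :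
    ∑ k ∈ Finset.range n, f (x + k) ≤ n * q ^ n * f x := by
  calc ∑ k ∈ Finset.range n, f (x + k)
      ≤ ∑ _k ∈ Finset.range n, q ^ n * f x := by
        refine Finset.sum_le_sum fun k hk => ?_
        calc f (x + k) ≤ q ^ k * f x := le_pow_mul_of_forall_succ_le (by linarith) hstep hx k
          _ ≤ q ^ n * f x := by
            gcongr
            exact (Finset.mem_range.1 hk).le
    _ = n * q ^ n * f x := by simp [mul_assoc]

/-- With the convention `r / 0 = 0`, a ratio tending to `1` forces its denominator to be
eventually nonzero. -/
theorem eventually_pos_and_succ_le_of_tendsto_div {f : ℝ → ℝ} (hf : ∀ y, 0 ≤ f y)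
    (hlim : Tendsto (fun y => f (y + 1) / f y) atTop (𝓝 1)) {q : ℝ} (hq : 1 < q) :
    ∀ᶠ y in atTop, 0 < f y ∧ f (y + 1) ≤ q * f y := by
  filter_upwards [hlim.eventually (lt_mem_nhds one_pos), hlim.eventually (gt_mem_nhds hq)]
    with y hpos hlt
  have hfy : 0 < f y := (hf y).lt_of_ne fun h => by simp [← h] at hpos
  exact ⟨hfy, ((div_lt_iff₀ hfy).1 hlt).le⟩

theorem interval_measure_potter_bound_general
    (ν : Measure ℝ)
    (hunif : TendstoUniformlyOn
      (fun x s => (ν (Set.Ioc (x + s) (x + s + 1))).toReal / (ν (Set.Ioc x (x + 1))).toReal)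
      (fun _ => 1) atTop (Set.Icc (0 : ℝ) 1)) :
    ∀ ε > 0, ∀ C > 1, ∃ x₀ : ℝ, ∀ x > x₀, ∀ h > 0,
      (ν (Set.Ioc x (x + h))).toReal
        ≤ C * (⌈h⌉ : ℝ) * Real.exp (ε * (⌈h⌉ : ℝ)) * (ν (Set.Ioc x (x + 1))).toReal := by
  intro ε hε C hC
  set f : ℝ → ℝ := fun y => (ν (Ioc y (y + 1))).toReal
  obtain ⟨a, ha⟩ := (eventually_pos_and_succ_le_of_tendsto_div (f := f)
    (fun _ => ENNReal.toReal_nonneg) (hunif.tendsto_at ⟨zero_le_one, le_rfl⟩)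
    (Real.one_lt_exp_iff.2 hε)).exists_forall_of_atTop
  refine ⟨a, fun x hx h hh => ?_⟩
  have hceil : (⌈h⌉ : ℝ) = (⌈h⌉.toNat : ℕ) := by
    exact_mod_cast (Int.toNat_of_nonneg (Int.ceil_pos.2 hh).le).symm
  have hfin : ∀ k : ℕ, ν (Ioc (x + k) (x + k + 1)) ≠ ∞ := fun k =>
    (ENNReal.toReal_pos_iff.1 (ha _ (by linarith [(Nat.cast_nonneg k : (0 : ℝ) ≤ k)])).1).2.ne
  rw [hceil, mul_comm ε, Real.exp_nat_mul]
  calc (ν (Ioc x (x + h))).toReal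
      ≤ ∑ k ∈ Finset.range ⌈h⌉.toNat, f (x + k) :=
        toReal_measure_Ioc_le_sum ν (by linarith [Int.le_ceil h]) fun k _ => hfin k
    _ ≤ ⌈h⌉.toNat * Real.exp ε ^ ⌈h⌉.toNat * f x :=
        sum_range_le_mul_pow_mul_of_forall_succ_le (Real.one_le_exp hε.le)
          (fun y hy => (ha y hy).2) hx.le ENNReal.toReal_nonneg _
    _ ≤ C * ⌈h⌉.toNat * Real.exp ε ^ ⌈h⌉.toNat * f x := by
        rw [mul_assoc C, mul_assoc C]
        exact le_mul_of_one_le_left (by positivity) hC.le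

/-- Potter-type bound: if `ν` is finite on bounded sets, `ν((x,x+1]) > 0` for all large `x`,
and `ν((x+s,x+s+1])/ν((x,x+1]) → 1` as `x → ∞` uniformly in `s ∈ [0,1]`, then for every
`ε > 0` and `C > 1` there is `x₀` such that for all `x > x₀` and `h > 0`,
`ν((x,x+h]) ≤ C ⌈h⌉ e^{ε⌈h⌉} ν((x,x+1])`. -/
theorem interval_measure_potter_bound
    (ν : Measure ℝ)
    (hfin : ∀ a b : ℝ, ν (Set.Ioc a b) < ⊤)
    (hpos : ∀ᶠ x in atTop, 0 < ν (Set.Ioc x (x + 1)))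
    (hunif : TendstoUniformlyOn
      (fun x s => (ν (Set.Ioc (x + s) (x + s + 1))).toReal / (ν (Set.Ioc x (x + 1))).toReal)
      (fun _ => 1) atTop (Set.Icc (0 : ℝ) 1)) :
    ∀ ε > 0, ∀ C > 1, ∃ x₀ : ℝ, ∀ x > x₀, ∀ h > 0,
      (ν (Set.Ioc x (x + h))).toReal
        ≤ C * (⌈h⌉ : ℝ) * Real.exp (ε * (⌈h⌉ : ℝ)) * (ν (Set.Ioc x (x + 1))).toReal :=
  interval_measure_potter_bound_general ν hunif
end

section
/- Let X be a real random variable with E X ∈ (0,∞] (the mean may be infinite), let (X_k)_{k≥1} be i.i.d. copies of X, put S_0 = 0 and S_n = X_1 + … + X_n for n ≥ 1, and let H be the renewal measure H(B) = Σ_{n≥0} P(S_n ∈ B). Then there exist constants α, β > 0 such that H((x, x+h]) ≤ α h + β for all x ∈ ℝ and all h > 0. -/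
/-!
Truncating `X` from above at a level `c` with `E[min X c] > 0`, the strong law of large numbers
gives `Sₙ → ∞` almost surely, so for some gap `m` the walk stays above `1` from time `m` on with
probability `> 1/2`. By independence and stationarity, the walk restarted at any time `k` does the
same, independently of what happened before `k`.

Fix an interval `I` of length `1` and pick visits to `I` greedily: the first visit, then the first
visit at least `m` steps after the previous pick, and so on. A pick after the one at time `k` forces
`S_{k+j} - S_k < 1` for some `j ≥ m`, so each pick occurs with at most half the probability of the
previous one and the expected number of picks is at most `2`. Every visit to `I` lies fewer than
`m` steps after a pick, hence `H(I) ≤ 2m`, and covering `(x, x + h]` by `⌈h⌉` unit intervals gives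
`H((x, x + h]) ≤ 2m (h + 1)`.
-/

open MeasureTheory ProbabilityTheory Filter Set
open scoped ENNReal

noncomputable section

namespace RandomWalk

section GreedyVisits

def IsFirstFrom (p : ℕ → Prop) (a k : ℕ) : Prop :=
  a ≤ k ∧ p k ∧ ∀ n, a ≤ n → n < k → ¬ p n

def IsGreedyVisit (p : ℕ → Prop) (m : ℕ) : ℕ → ℕ → Prop
  | 0, k => IsFirstFrom p 0 k
  | i + 1, k => ∃ k', IsGreedyVisit p m i k' ∧ IsFirstFrom p (k' + m) k

variable {p : ℕ → Prop} {m a n k k' : ℕ}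

theorem IsFirstFrom.unique (h : IsFirstFrom p a k) (h' : IsFirstFrom p a k') : k = k' := by
  by_contra hne
  rcases Nat.lt_or_gt_of_ne hne with hlt | hlt
  · exact h'.2.2 k h.1 hlt h.2.1
  · exact h.2.2 k' h'.1 hlt h'.2.1

theorem exists_isFirstFrom_le (hn : p n) (han : a ≤ n) : ∃ k ≤ n, IsFirstFrom p a k := by
  classical
  have hex : ∃ k, a ≤ k ∧ p k := ⟨n, han, hn⟩
  exact ⟨Nat.find hex, Nat.find_min' hex ⟨han, hn⟩, (Nat.find_spec hex).1, (Nat.find_spec hex).2,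
    fun j hj hjk hpj => Nat.find_min hex hjk ⟨hj, hpj⟩⟩

theorem IsGreedyVisit.prop : ∀ {i k}, IsGreedyVisit p m i k → p k
  | 0, _, h => h.2.1
  | _ + 1, _, ⟨_, _, h⟩ => h.2.1

theorem IsGreedyVisit.unique :
    ∀ {i k k'}, IsGreedyVisit p m i k → IsGreedyVisit p m i k' → k = k'
  | 0, _, _, h, h' => IsFirstFrom.unique h h'
  | _ + 1, _, _, ⟨_, hl, h⟩, ⟨_, hl', h'⟩ => by
    rw [hl.unique hl'] at h
    exact h.unique h'

theorem exists_isGreedyVisit_le_lt_add (hm : 0 < m) (hn : p n) :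
    ∃ i k, IsGreedyVisit p m i k ∧ k ≤ n ∧ n < k + m := by
  suffices ∀ d i k, IsGreedyVisit p m i k → k ≤ n → n - k < d →
      ∃ i k, IsGreedyVisit p m i k ∧ k ≤ n ∧ n < k + m by
    obtain ⟨k, hkn, hk⟩ := exists_isFirstFrom_le hn (Nat.zero_le n)
    exact this _ 0 k hk hkn (Nat.lt_succ_self _)
  intro d
  induction d with
  | zero => intro _ _ _ _ h; omega
  | succ d ih =>
    intro i k hk hkn hd
    by_cases hnk : n < k + m
    · exact ⟨i, k, hk, hkn, hnk⟩
    obtain ⟨k', hk'n, hk'⟩ := exists_isFirstFrom_le hn (not_lt.1 hnk)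
    exact ih (i + 1) k' ⟨k, hk, hk'⟩ hk'n (by have := hk'.1; omega)

end GreedyVisits

section Measurability

variable {Ω : Type*} {mΩ : MeasurableSpace Ω} {p : Ω → ℕ → Prop} {k : ℕ}

theorem measurableSet_isFirstFrom (hp : ∀ n ≤ k, MeasurableSet {ω | p ω n}) (a : ℕ) :
    MeasurableSet {ω | IsFirstFrom (p ω) a k} := by
  refine measurableSet_setOfPred.2 <| measurable_const.and <|
    (measurableSet_setOfPred.1 (hp k le_rfl)).and (Measurable.forall fun n => ?_)
  by_cases hnk : n < k
  · exact measurable_const.imp (measurable_const.imp (measurableSet_setOfPred.1 (hp n hnk.le)).not)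
  · simp only [hnk, false_imp_iff, imp_true_iff]
    exact measurable_const

theorem measurableSet_isGreedyVisit (m : ℕ) :
    ∀ i {k}, (∀ n ≤ k, MeasurableSet {ω | p ω n}) →
      MeasurableSet {ω | IsGreedyVisit (p ω) m i k}
  | 0, _, hp => measurableSet_isFirstFrom hp 0
  | i + 1, k, hp => measurableSet_setOfPred.2 <| Measurable.exists fun k' => by
    by_cases hk : k' + m ≤ k
    · exact (measurableSet_setOfPred.1 (measurableSet_isGreedyVisit m i fun n hn =>
        hp n (by omega))).and (measurableSet_setOfPred.1 (measurableSet_isFirstFrom hp _))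
    · simp only [IsFirstFrom, hk, false_and, and_false]
      exact measurable_const

end Measurability

def escapeSet (m : ℕ) : Set (ℕ → ℝ) := {x | ∀ j, m ≤ j → 1 < ∑ i ∈ Finset.range j, x i}

theorem measurableSet_escapeSet (m : ℕ) : MeasurableSet (escapeSet m) :=
  measurableSet_setOfPred.2 <| Measurable.forall fun _ => measurable_const.imp <|
    (measurableSet_lt measurable_const
      (Finset.measurable_sum _ fun i _ => measurable_pi_apply i)).mem

theorem escapeSet_mono : Monotone escapeSet :=
  fun _ _ hmm' _ hx j hj => hx j (hmm'.trans hj)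

section Walk

variable {Ω : Type*} {Xk : ℕ → Ω → ℝ} {S : ℕ → Ω → ℝ}

abbrev past (Xk : ℕ → Ω → ℝ) (k : ℕ) : MeasurableSpace Ω :=
  ⨆ j ∈ Iio k, MeasurableSpace.comap (Xk j) inferInstance

theorem measurable_past_of_le (hS : ∀ n ω, S n ω = ∑ i ∈ Finset.range n, Xk i ω) {n k : ℕ}
    (hnk : n ≤ k) : Measurable[past Xk k] (S n) := by
  rw [show S n = fun ω => ∑ i ∈ Finset.range n, Xk i ω from funext (hS n)]
  exact Finset.measurable_sum _ fun i hi => (comap_measurable (Xk i)).mono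
    (le_iSup₂ (f := fun j (_ : j ∈ Iio k) => MeasurableSpace.comap (Xk j) inferInstance) i
      (mem_Iio.2 (lt_of_lt_of_le (Finset.mem_range.1 hi) hnk))) le_rfl

theorem sum_range_shift_eq_sub (hS : ∀ n ω, S n ω = ∑ i ∈ Finset.range n, Xk i ω)
    (k j : ℕ) (ω : Ω) : ∑ i ∈ Finset.range j, Xk (k + i) ω = S (k + j) ω - S k ω := by
  rw [hS, hS, Finset.sum_range_add, add_sub_cancel_left]

theorem shift_notMem_escapeSet (hS : ∀ n ω, S n ω = ∑ i ∈ Finset.range n, Xk i ω)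
    {ω : Ω} {y : ℝ} {m k k' : ℕ} (hk : S k ω ∈ Ioc y (y + 1)) (hk' : S k' ω ∈ Ioc y (y + 1))
    (hkk' : k + m ≤ k') : (fun i => Xk (k + i) ω) ∉ escapeSet m := by
  intro hesc
  have h := hesc (k' - k) (by omega)
  rw [sum_range_shift_eq_sub hS, Nat.add_sub_cancel' (by omega)] at h
  linarith [hk.1, hk'.2]

def greedyVisitSet (S : ℕ → Ω → ℝ) (I : Set ℝ) (m i k : ℕ) : Set Ω :=
  {ω | IsGreedyVisit (fun n => S n ω ∈ I) m i k}

theorem measurableSet_past_greedyVisitSet (hS : ∀ n ω, S n ω = ∑ i ∈ Finset.range n, Xk i ω)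
    {I : Set ℝ} (hI : MeasurableSet I) (m i k : ℕ) :
    MeasurableSet[past Xk k] (greedyVisitSet S I m i k) :=
  measurableSet_isGreedyVisit (mΩ := past Xk k) m i fun _ hn => measurable_past_of_le hS hn hI

variable [MeasurableSpace Ω] {P : Measure Ω}

theorem past_le (hXk : ∀ n, Measurable (Xk n)) (k : ℕ) : past Xk k ≤ ‹MeasurableSpace Ω› :=
  iSup₂_le fun j _ => (hXk j).comap_le

theorem ofReal_neg_min_of_nonneg {c : ℝ} (hc : 0 ≤ c) (x : ℝ) :
    ENNReal.ofReal (-min x c) = ENNReal.ofReal (-x) := by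
  rw [← max_neg_neg, ENNReal.ofReal_max, ENNReal.ofReal_of_nonpos (neg_nonpos.2 hc), max_zero]

theorem enorm_min_le_of_nonneg {c : ℝ} (hc : 0 ≤ c) (x : ℝ) :
    ‖min x c‖ₑ ≤ ENNReal.ofReal c + ENNReal.ofReal (-x) := by
  have habs : |min x c| ≤ max c (-min x c) :=
    abs_le.2 ⟨by linarith [le_max_right c (-min x c)], (min_le_right x c).trans (le_max_left c _)⟩
  rw [Real.enorm_eq_ofReal_abs, ← ofReal_neg_min_of_nonneg hc]
  exact (ENNReal.ofReal_le_ofReal habs).trans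
    (ENNReal.ofReal_max _ _ ▸ max_le le_self_add le_add_self)

theorem lintegral_ofReal_eq_iSup_min {X : Ω → ℝ} (hX : Measurable X) :
    ∫⁻ ω, ENNReal.ofReal (X ω) ∂P = ⨆ c : ℕ, ∫⁻ ω, ENNReal.ofReal (min (X ω) c) ∂P := by
  rw [← lintegral_iSup (fun c => (hX.min measurable_const).ennreal_ofReal)
    fun a b hab ω => ENNReal.ofReal_le_ofReal (min_le_min_left _ (Nat.cast_le.2 hab))]
  refine lintegral_congr fun ω => le_antisymm ?_
    (iSup_le fun c => ENNReal.ofReal_le_ofReal (min_le_left _ _))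
  obtain ⟨c, hc⟩ := exists_nat_ge (X ω)
  exact le_iSup_of_le c (by rw [min_eq_left hc])

theorem integrable_min_of_lintegral_neg_lt_top [IsFiniteMeasure P] {X : Ω → ℝ}
    (hX : Measurable X) (hneg : ∫⁻ ω, ENNReal.ofReal (-X ω) ∂P < ⊤) {c : ℝ} (hc : 0 ≤ c) :
    Integrable (fun ω => min (X ω) c) P := by
  refine ⟨(hX.min measurable_const).aestronglyMeasurable, ?_⟩
  calc ∫⁻ ω, ‖min (X ω) c‖ₑ ∂P
      ≤ ∫⁻ ω, ENNReal.ofReal c + ENNReal.ofReal (-X ω) ∂P :=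
        lintegral_mono fun ω => enorm_min_le_of_nonneg hc _
    _ = ENNReal.ofReal c * P univ + ∫⁻ ω, ENNReal.ofReal (-X ω) ∂P := by
        rw [lintegral_add_left measurable_const, lintegral_const]
    _ < ⊤ := ENNReal.add_lt_top.2
        ⟨ENNReal.mul_lt_top ENNReal.ofReal_lt_top (measure_lt_top P _), hneg⟩

theorem exists_integrable_min_integral_pos [IsFiniteMeasure P] {X : Ω → ℝ} (hX : Measurable X)
    (hneg : ∫⁻ ω, ENNReal.ofReal (-X ω) ∂P < ⊤)
    (hmean : ∫⁻ ω, ENNReal.ofReal (-X ω) ∂P < ∫⁻ ω, ENNReal.ofReal (X ω) ∂P) :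
    ∃ c : ℝ, Integrable (fun ω => min (X ω) c) P ∧ 0 < ∫ ω, min (X ω) c ∂P := by
  obtain ⟨c, hc⟩ := lt_iSup_iff.1 (lintegral_ofReal_eq_iSup_min hX ▸ hmean)
  have hint := integrable_min_of_lintegral_neg_lt_top hX hneg c.cast_nonneg
  refine ⟨c, hint, ?_⟩
  rw [integral_eq_lintegral_pos_part_sub_lintegral_neg_part hint, sub_pos]
  simp only [ofReal_neg_min_of_nonneg c.cast_nonneg]
  exact (ENNReal.toReal_lt_toReal hneg.ne hint.lintegral_lt_top.ne).2 hc

theorem ae_tendsto_sum_atTop_of_integral_pos {Y : ℕ → Ω → ℝ} (hint : Integrable (Y 0) P)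
    (hindep : Pairwise fun i j => IndepFun (Y i) (Y j) P)
    (hident : ∀ i, IdentDistrib (Y i) (Y 0) P P) (hpos : 0 < ∫ ω, Y 0 ω ∂P) :
    ∀ᵐ ω ∂P, Tendsto (fun n => ∑ i ∈ Finset.range n, Y i ω) atTop atTop := by
  filter_upwards [strong_law_ae_real Y hint hindep hident] with ω hω
  refine (hω.pos_mul_atTop hpos tendsto_natCast_atTop_atTop).congr' ?_
  filter_upwards [eventually_ne_atTop 0] with n hn
  exact div_mul_cancel₀ _ (Nat.cast_ne_zero.2 hn)

theorem ae_tendsto_sum_atTop_of_lintegral_neg_lt [IsFiniteMeasure P] {X : Ω → ℝ}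
    (hX : Measurable X) (hXk : ∀ n, Measurable (Xk n)) (hindep : iIndepFun Xk P)
    (hident : ∀ n, P.map (Xk n) = P.map X) (hneg : ∫⁻ ω, ENNReal.ofReal (-X ω) ∂P < ⊤)
    (hmean : ∫⁻ ω, ENNReal.ofReal (-X ω) ∂P < ∫⁻ ω, ENNReal.ofReal (X ω) ∂P) :
    ∀ᵐ ω ∂P, Tendsto (fun n => ∑ i ∈ Finset.range n, Xk i ω) atTop atTop := by
  obtain ⟨c, hint, hpos⟩ := exists_integrable_min_integral_pos hX hneg hmean
  have hmin : Measurable fun x : ℝ => min x c := measurable_id.min measurable_const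
  have hident' : ∀ i, IdentDistrib (fun ω => min (Xk i ω) c) (fun ω => min (X ω) c) P P :=
    fun i => IdentDistrib.comp ⟨(hXk i).aemeasurable, hX.aemeasurable, hident i⟩ hmin
  have htrunc := ae_tendsto_sum_atTop_of_integral_pos (Y := fun i ω => min (Xk i ω) c)
    ((hident' 0).integrable_iff.2 hint)
    (fun i j hij => (hindep.indepFun hij).comp hmin hmin)
    (fun i => (hident' i).trans (hident' 0).symm) ((hident' 0).integral_eq ▸ hpos)
  filter_upwards [htrunc] with ω hω
  exact tendsto_atTop_mono (fun n => Finset.sum_le_sum fun i _ => min_le_left _ _) hω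

theorem exists_measure_escapeSet_compl_lt [IsFiniteMeasure P] (hXk : ∀ n, Measurable (Xk n))
    (h : ∀ᵐ ω ∂P, Tendsto (fun n => ∑ i ∈ Finset.range n, Xk i ω) atTop atTop)
    {ε : ℝ≥0∞} (hε : 0 < ε) :
    ∃ m, 0 < m ∧ P ((fun ω i => Xk i ω) ⁻¹' (escapeSet m)ᶜ) < ε := by
  set D : ℕ → Set Ω := fun m => (fun ω i => Xk i ω) ⁻¹' (escapeSet m)ᶜ
  have hD_meas : ∀ m, MeasurableSet (D m) := fun m =>
    (measurable_pi_lambda _ hXk) (measurableSet_escapeSet m).compl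
  have hD_anti : Antitone D := fun _ _ hmm' _ hω hesc => hω (escapeSet_mono hmm' hesc)
  have hD_null : P (⋂ m, D m) = 0 := by
    refine measure_mono_null (fun ω hω => ?_) (ae_iff.1 h)
    intro htends
    obtain ⟨N, hN⟩ := eventually_atTop.1 (htends.eventually_gt_atTop 1)
    exact mem_iInter.1 hω N hN
  have hlim := tendsto_measure_iInter_atTop (fun m => (hD_meas m).nullMeasurableSet) hD_anti
    ⟨0, measure_ne_top P _⟩
  rw [hD_null] at hlim
  exact ((eventually_gt_atTop 0).and (hlim.eventually (gt_mem_nhds hε))).exists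

theorem map_shift_eq (hXk : ∀ n, Measurable (Xk n)) (hindep : iIndepFun Xk P) {μ : Measure ℝ}
    (hident : ∀ n, P.map (Xk n) = μ) (k : ℕ) :
    P.map (fun ω i => Xk (k + i) ω) = P.map (fun ω i => Xk i ω) := by
  rw [(hindep.precomp (add_right_injective k)).map_fun_eq_infinitePi_map (fun i => hXk _),
    hindep.map_fun_eq_infinitePi_map hXk]
  simp only [hident]

theorem measure_inter_preimage_shift (hXk : ∀ n, Measurable (Xk n))
    (hindep : iIndepFun Xk P) {μ : Measure ℝ} (hident : ∀ n, P.map (Xk n) = μ) {k : ℕ}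
    {A : Set Ω} (hA : MeasurableSet[past Xk k] A) {B : Set (ℕ → ℝ)} (hB : MeasurableSet B) :
    P (A ∩ (fun ω i => Xk (k + i) ω) ⁻¹' B) = P A * P ((fun ω i => Xk i ω) ⁻¹' B) := by
  have hpast_future := indep_iSup_of_disjoint (fun j => (hXk j).comap_le)
    ((iIndepFun_iff_iIndep _ _ _).1 hindep) (Iio_disjoint_Ici (le_refl k))
  have hfuture : MeasurableSpace.comap (fun ω i => Xk (k + i) ω) inferInstance ≤
      ⨆ j ∈ Ici k, MeasurableSpace.comap (Xk j) inferInstance := by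
    rw [MeasurableSpace.comap_process_pi]
    exact iSup_le fun i => le_iSup₂
      (f := fun j (_ : j ∈ Ici k) => MeasurableSpace.comap (Xk j) inferInstance) (k + i) (by simp)
  rw [(Indep_iff _ _ P).1 hpast_future A _ hA (hfuture _ ⟨B, hB, rfl⟩),
    ← Measure.map_apply (measurable_pi_lambda _ fun i => hXk _) hB, map_shift_eq hXk hindep hident,
    Measure.map_apply (measurable_pi_lambda _ hXk) hB]

def renewalMeasure (P : Measure Ω) (S : ℕ → Ω → ℝ) : Measure ℝ :=
  Measure.sum fun n => P.map (S n)

theorem renewalMeasure_apply (hS : ∀ n, Measurable (S n)) {B : Set ℝ} (hB : MeasurableSet B) :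
    renewalMeasure P S B = ∑' n, P (S n ⁻¹' B) := by
  simp only [renewalMeasure, Measure.sum_apply _ hB, Measure.map_apply (hS _) hB]

theorem tsum_measure_le_mul_of_subset_window {A : ℕ → Set Ω} {C : ℕ → ℕ → Set Ω} {m : ℕ}
    (hA : ∀ n, A n ⊆ ⋃ i, ⋃ k, ⋃ (_ : k ≤ n ∧ n < k + m), C i k) :
    ∑' n, P (A n) ≤ m * ∑' i, ∑' k, P (C i k) := by
  have hwindow : ∀ (a : ℝ≥0∞) k, ∑' n, (if k ≤ n ∧ n < k + m then a else 0) = m * a := by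
    intro a k
    rw [tsum_eq_sum (s := Finset.Ico k (k + m)) fun n hn => if_neg (by simpa using hn),
      Finset.sum_ite_of_true fun n hn => by simpa using hn, Finset.sum_const, Nat.card_Ico,
      add_tsub_cancel_left, nsmul_eq_mul]
  calc ∑' n, P (A n)
      ≤ ∑' n, ∑' i, ∑' k, (if k ≤ n ∧ n < k + m then P (C i k) else 0) := by
        refine ENNReal.tsum_le_tsum fun n => (measure_mono (hA n)).trans <|
          (measure_iUnion_le _).trans <| ENNReal.tsum_le_tsum fun i =>
          (measure_iUnion_le _).trans <| ENNReal.tsum_le_tsum fun k => ?_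
        split_ifs with h <;> simp [h]
    _ = ∑' i, ∑' k, m * P (C i k) := by
        rw [ENNReal.tsum_comm]
        refine tsum_congr fun i => ?_
        rw [ENNReal.tsum_comm]
        exact tsum_congr fun k => hwindow _ k
    _ = m * ∑' i, ∑' k, P (C i k) := by simp_rw [ENNReal.tsum_mul_left]

theorem tsum_measure_greedyVisitSet (hXk : ∀ n, Measurable (Xk n))
    (hS : ∀ n ω, S n ω = ∑ i ∈ Finset.range n, Xk i ω) {I : Set ℝ} (hI : MeasurableSet I)
    (m i : ℕ) : ∑' k, P (greedyVisitSet S I m i k) = P (⋃ k, greedyVisitSet S I m i k) :=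
  (measure_iUnion (fun _ _ hne => Set.disjoint_left.2 fun _ h h' => hne (h.unique h'))
    fun k => past_le hXk k _ (measurableSet_past_greedyVisitSet hS hI m i k)).symm

theorem tsum_measure_greedyVisitSet_succ_le (hXk : ∀ n, Measurable (Xk n))
    (hindep : iIndepFun Xk P) {μ : Measure ℝ} (hident : ∀ n, P.map (Xk n) = μ)
    (hS : ∀ n ω, S n ω = ∑ i ∈ Finset.range n, Xk i ω) {m : ℕ} {q : ℝ≥0∞}
    (hesc : P ((fun ω i => Xk i ω) ⁻¹' (escapeSet m)ᶜ) ≤ q) (y : ℝ) (i : ℕ) :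
    ∑' k, P (greedyVisitSet S (Ioc y (y + 1)) m (i + 1) k) ≤
      (∑' k, P (greedyVisitSet S (Ioc y (y + 1)) m i k)) * q := by
  set C := greedyVisitSet S (Ioc y (y + 1)) m
  calc ∑' k, P (C (i + 1) k)
      ≤ P (⋃ k, C i k ∩ (fun ω j => Xk (k + j) ω) ⁻¹' (escapeSet m)ᶜ) := by
        rw [tsum_measure_greedyVisitSet hXk hS measurableSet_Ioc]
        refine measure_mono (iUnion_subset fun k' ω ⟨k, hk, hk'⟩ => mem_iUnion.2 ?_)
        exact ⟨k, hk, shift_notMem_escapeSet hS hk.prop hk'.2.1 hk'.1⟩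
    _ ≤ ∑' k, P (C i k) * P ((fun ω i => Xk i ω) ⁻¹' (escapeSet m)ᶜ) :=
        (measure_iUnion_le _).trans_eq <| tsum_congr fun k =>
          measure_inter_preimage_shift hXk hindep hident
            (measurableSet_past_greedyVisitSet hS measurableSet_Ioc m i k)
            (measurableSet_escapeSet m).compl
    _ ≤ (∑' k, P (C i k)) * q := by
        rw [ENNReal.tsum_mul_right]
        gcongr

theorem renewalMeasure_Ioc_le [IsProbabilityMeasure P] (hXk : ∀ n, Measurable (Xk n))
    (hindep : iIndepFun Xk P) {μ : Measure ℝ} (hident : ∀ n, P.map (Xk n) = μ)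
    (hS : ∀ n ω, S n ω = ∑ i ∈ Finset.range n, Xk i ω) {m : ℕ} (hm : 0 < m) {q : ℝ≥0∞}
    (hesc : P ((fun ω i => Xk i ω) ⁻¹' (escapeSet m)ᶜ) ≤ q) (y : ℝ) :
    renewalMeasure P S (Ioc y (y + 1)) ≤ m * (1 - q)⁻¹ := by
  have hdecay : ∀ i, ∑' k, P (greedyVisitSet S (Ioc y (y + 1)) m i k) ≤ q ^ i := by
    intro i
    induction i with
    | zero => simpa [tsum_measure_greedyVisitSet hXk hS measurableSet_Ioc] using prob_le_one
    | succ i ih =>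
      exact (tsum_measure_greedyVisitSet_succ_le hXk hindep hident hS hesc y i).trans
        (by rw [pow_succ]; gcongr)
  calc renewalMeasure P S (Ioc y (y + 1)) = ∑' n, P (S n ⁻¹' Ioc y (y + 1)) :=
        renewalMeasure_apply
          (fun n => (measurable_past_of_le hS le_rfl).mono (past_le hXk n) le_rfl)
          measurableSet_Ioc
    _ ≤ m * ∑' i, ∑' k, P (greedyVisitSet S (Ioc y (y + 1)) m i k) :=
        tsum_measure_le_mul_of_subset_window fun n ω hω => by
          obtain ⟨i, k, hik, hkn, hnk⟩ :=
            exists_isGreedyVisit_le_lt_add (p := (S · ω ∈ Ioc y (y + 1))) hm hω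
          exact mem_iUnion.2 ⟨i, mem_iUnion.2 ⟨k, mem_iUnion.2 ⟨⟨hkn, hnk⟩, hik⟩⟩⟩
    _ ≤ m * ∑' i, q ^ i := by gcongr with i; exact hdecay i
    _ = m * (1 - q)⁻¹ := by rw [ENNReal.tsum_geometric]

theorem measure_Ioc_add_natCast_le {μ : Measure ℝ} {C : ℝ≥0∞}
    (h : ∀ y, μ (Ioc y (y + 1)) ≤ C) (x : ℝ) (N : ℕ) : μ (Ioc x (x + N)) ≤ N * C := by
  induction N with
  | zero => simp
  | succ N ih =>
    calc μ (Ioc x (x + ↑(N + 1))) = μ (Ioc x (x + N) ∪ Ioc (x + N) (x + N + 1)) := by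
          rw [Ioc_union_Ioc_eq_Ioc (by linarith) (by linarith), Nat.cast_succ, add_assoc]
      _ ≤ N * C + C := (measure_union_le _ _).trans (add_le_add ih (h _))
      _ = ↑(N + 1) * C := by push_cast; ring

end Walk

end RandomWalk

open RandomWalk

/-- For a random walk with positive (possibly infinite) drift, the renewal measure of
intervals grows at most linearly: there are `α, β > 0` with `H((x,x+h]) ≤ α h + β`
for all `x` and all `h > 0`. -/
theorem renewal_measure_linear_bound
    {Ω : Type*} [MeasurableSpace Ω] (P : Measure Ω) [IsProbabilityMeasure P]
    (X : Ω → ℝ) (hX : Measurable X)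
    (Xk : ℕ → Ω → ℝ) (hXkmeas : ∀ n, Measurable (Xk n))
    (hindep : iIndepFun Xk P)
    (hident : ∀ n, P.map (Xk n) = P.map X)
    (S : ℕ → Ω → ℝ) (hS : ∀ n ω, S n ω = ∑ i ∈ Finset.range n, Xk i ω)
    -- `E X ∈ (0, ∞]` : the negative part is finite and smaller than the positive part
    (hneg : ∫⁻ ω, ENNReal.ofReal (-X ω) ∂P < ⊤)
    (hmean : ∫⁻ ω, ENNReal.ofReal (-X ω) ∂P < ∫⁻ ω, ENNReal.ofReal (X ω) ∂P) :
    ∃ α > (0 : ℝ), ∃ β > (0 : ℝ), ∀ x : ℝ, ∀ h > (0 : ℝ),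
      ∑' n, P {ω | S n ω ∈ Set.Ioc x (x + h)} ≤ ENNReal.ofReal (α * h + β) := by
  obtain ⟨m, hm, hesc⟩ := exists_measure_escapeSet_compl_lt hXkmeas
    (ae_tendsto_sum_atTop_of_lintegral_neg_lt hX hXkmeas hindep hident hneg hmean)
    (by norm_num : (0 : ℝ≥0∞) < 2⁻¹)
  have hunit : ∀ y, renewalMeasure P S (Ioc y (y + 1)) ≤ m * 2 := fun y => by
    simpa [ENNReal.one_sub_inv_two] using
      renewalMeasure_Ioc_le hXkmeas hindep hident hS hm hesc.le y
  have hSmeas : ∀ n, Measurable (S n) := fun n =>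
    (funext (hS n)).symm ▸ Finset.measurable_sum _ fun i _ => hXkmeas i
  have hm' : (0 : ℝ) < 2 * m := by positivity
  refine ⟨2 * m, hm', 2 * m, hm', fun x h hh => ?_⟩
  calc ∑' n, P {ω | S n ω ∈ Ioc x (x + h)} = renewalMeasure P S (Ioc x (x + h)) :=
        (renewalMeasure_apply hSmeas measurableSet_Ioc).symm
    _ ≤ renewalMeasure P S (Ioc x (x + ⌈h⌉₊)) :=
        measure_mono (Ioc_subset_Ioc_right (by linarith [Nat.le_ceil h]))
    _ ≤ ⌈h⌉₊ * (m * 2) := measure_Ioc_add_natCast_le hunit x _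
    _ = ENNReal.ofReal (⌈h⌉₊ * (m * 2)) := by
        rw [ENNReal.ofReal_mul (by positivity), ENNReal.ofReal_mul (by positivity)]
        simp
    _ ≤ ENNReal.ofReal (2 * m * h + 2 * m) :=
        ENNReal.ofReal_le_ofReal (by nlinarith [Nat.ceil_lt_add_one hh.le])
end
end
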